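/- arXiv:2511.08304 — 9 statements merged into one kernel-verified Lean document; each statement's English description precedes it below -/
import Mathlib

section
/- Let X = A_1 × ⋯ × A_m be a Cartesian set over F_q, let 0 ≤ d ≤ m, and let 1 ≤ r ≤ Σ_{i=0}^{d} C(m,i). Then the r-th generalized Hamming weight of the Cartesian square-free code C_{≤d}^{X,S} satisfies d_r(C_{≤d}^{X,S}) = n_1⋯n_m − max{|Δ_X(N)| : N ⊆ S_{≤d}(m), |N| = r} = min{|∇_X(N)| : N ⊆ S_{≤d}(m), |N| = r}. -/
/-!
Order exponent vectors lexicographically. The evaluations of the monomials `x^β`, `β ∈ B_X`, form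
a basis of all functions `X → F` (interpolate one coordinate at a time), and reducing `x^δ` modulo
the polynomials `∏_{e ∈ A_i} (x_i - e)` only lowers exponents coordinatewise. Hence every nonzero
function has a leading exponent, an `r`-dimensional space has exactly `r` distinct leading
exponents, and multiplying by `x^γ` adds `γ` to the leading exponent as long as the result stays
in `B_X`.

If `C` is an `r`-dimensional subcode with leading exponents `N`, then every `β ∈ ∇_X(N)` is the
leading exponent of some `x^γ c` with `c ∈ C`; these functions vanish off `supp C`, so
`|∇_X(N)| ≤ |supp C|` (footprint bound). Conversely, for `N ⊆ S_{≤d}(m)` the codewords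
`∏_{a_i = 1} (x_i - t_i)`, `a ∈ N`, have leading exponents `N` and vanish at every point whose
index vector (numbering `A_i` from `t_i = 0`) lies outside `∇_X(N)`. Finally
`|Δ_X(N)| = n_1 ⋯ n_m - |∇_X(N)|`.
-/

/-- Square-free exponent vectors of total degree `d` in `m` variables. -/
def Sd (m d : ℕ) : Set (Fin m → ℕ) := {a | (∀ i, a i ≤ 1) ∧ ∑ i, a i = d}

/-- Square-free exponent vectors of total degree at most `d` in `m` variables. -/
def Sle (m d : ℕ) : Set (Fin m → ℕ) := {a | (∀ i, a i ≤ 1) ∧ ∑ i, a i ≤ d}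

/-- Evaluation code over the Cartesian set `X = A 0 × ⋯ × A (m-1)`, spanned by the
evaluations of the monomials `x^a` for `a ∈ S`. -/
noncomputable def evalCodeX {F : Type*} [Field F] {m : ℕ} (A : Fin m → Finset F)
    (S : Set (Fin m → ℕ)) :
    Submodule F ({P : Fin m → F // ∀ i, P i ∈ A i} → F) :=
  Submodule.span F ((fun (a : Fin m → ℕ) (P : {P : Fin m → F // ∀ i, P i ∈ A i}) =>
    ∏ i, P.1 i ^ a i) '' S)

open Classical in
/-- Support of a linear code. -/
noncomputable def codeSupp {F ι : Type*} [Field F] [Fintype ι]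
    (C : Submodule F (ι → F)) : Finset ι :=
  Finset.univ.filter (fun i => ∃ c ∈ C, c i ≠ 0)

/-- The `r`-th generalized Hamming weight of a linear code: the minimum cardinality of the
support of an `r`-dimensional subcode. -/
noncomputable def GHW {F ι : Type*} [Field F] [Fintype ι]
    (C : Submodule F (ι → F)) (r : ℕ) : ℕ :=
  sInf {k | ∃ C' : Submodule F (ι → F),
    C' ≤ C ∧ Module.finrank F C' = r ∧ (codeSupp C').card = k}

/-- The footprint box `B_X = {0,…,n_1−1} × ⋯ × {0,…,n_m−1}`. -/
noncomputable def BX {F : Type*} {m : ℕ} (A : Fin m → Finset F) : Finset (Fin m → ℕ) :=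
  Fintype.piFinset (fun i => Finset.range (A i).card)

open Classical in
/-- The shadow `∇_X(N)`: elements of `B_X` divisible by some element of `N`. -/
noncomputable def nablaX {F : Type*} {m : ℕ} (A : Fin m → Finset F)
    (N : Set (Fin m → ℕ)) : Finset (Fin m → ℕ) :=
  (BX A).filter (fun b => ∃ a ∈ N, ∀ i, a i ≤ b i)

open Classical in
/-- The footprint `Δ_X(N) = B_X ∖ ∇_X(N)`. -/
noncomputable def deltaX {F : Type*} {m : ℕ} (A : Fin m → Finset F)
    (N : Set (Fin m → ℕ)) : Finset (Fin m → ℕ) :=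
  (BX A).filter (fun b => ¬ ∃ a ∈ N, ∀ i, a i ≤ b i)


open Finset

namespace Module.Basis

variable {ι K V : Type*} [LinearOrder ι] [Field K] [AddCommGroup V] [Module K V]
  (b : Basis ι K V)

noncomputable def lead (v : V) : WithBot ι := (b.repr v).support.max

variable {b}

lemma lead_eq_bot_iff {v : V} : b.lead v = ⊥ ↔ v = 0 := by
  simp [lead, Finset.max_eq_bot]

lemma exists_lead_eq {v : V} (hv : v ≠ 0) : ∃ i : ι, b.lead v = i :=
  WithBot.ne_bot_iff_exists.mp (mt lead_eq_bot_iff.mp hv) |>.imp fun _ => Eq.symm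

lemma ne_zero_of_lead_eq {v : V} {i : ι} (h : b.lead v = i) : v ≠ 0 := fun hv =>
  WithBot.bot_ne_coe ((lead_eq_bot_iff.mpr hv).symm.trans h)

lemma repr_ne_zero_of_lead_eq {v : V} {i : ι} (h : b.lead v = i) : b.repr v i ≠ 0 :=
  Finsupp.mem_support_iff.mp (Finset.mem_of_max h)

lemma le_lead_of_repr_ne_zero {v : V} {i : ι} (h : b.repr v i ≠ 0) :
    (i : WithBot ι) ≤ b.lead v :=
  Finset.le_max (Finsupp.mem_support_iff.mpr h)

lemma lead_eq_of_repr {v : V} {i : ι} (hi : b.repr v i ≠ 0)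
    (h : ∀ j, b.repr v j ≠ 0 → j ≤ i) : b.lead v = i :=
  le_antisymm
    (Finset.max_le fun j hj => WithBot.coe_le_coe.mpr (h j (Finsupp.mem_support_iff.mp hj)))
    (le_lead_of_repr_ne_zero hi)

lemma linearIndependent_of_injective_lead {κ : Type*} {v : κ → V} (hv : ∀ k, v k ≠ 0)
    (h : Function.Injective (b.lead ∘ v)) : LinearIndependent K v := by
  classical
  rw [linearIndependent_iff']
  intro s g hsum
  by_contra! hg
  obtain ⟨k₀, hk₀, hmax⟩ := Finset.exists_max_image (s.filter (g · ≠ 0)) (b.lead ∘ v)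
    (by simpa [Finset.Nonempty] using hg)
  obtain ⟨i₀, hi₀⟩ := exists_lead_eq (b := b) (hv k₀)
  rw [Finset.mem_filter] at hk₀
  have hcoeff : ∑ k ∈ s, g k * b.repr (v k) i₀ = 0 := by
    simpa [Finsupp.finsetSum_apply] using congrArg (fun x => b.repr x i₀) hsum
  rw [Finset.sum_eq_single_of_mem k₀ hk₀.1] at hcoeff
  · exact mul_ne_zero hk₀.2 (repr_ne_zero_of_lead_eq hi₀) hcoeff
  intro k hk hne
  by_cases hgk : g k = 0
  · simp [hgk]
  have hlt : b.lead (v k) < i₀ := hi₀.symm ▸ lt_of_le_of_ne (hmax k (by simp [hk, hgk]))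
    (fun heq => hne (h heq))
  by_contra hrepr
  exact (le_lead_of_repr_ne_zero (right_ne_zero_of_mul hrepr)).not_gt hlt

variable [Fintype ι]

variable (b) in
open Classical in
noncomputable def leadSet (W : Submodule K V) : Finset ι :=
  univ.filter fun i => ∃ w ∈ W, b.lead w = i

lemma mem_leadSet {W : Submodule K V} {i : ι} :
    i ∈ b.leadSet W ↔ ∃ w ∈ W, b.lead w = i := by
  classical
  simp [leadSet]

lemma finrank_le_card_leadSet (W : Submodule K V) :
    Module.finrank K W ≤ #(b.leadSet W) := by
  classical
  let φ : W →ₗ[K] (b.leadSet W → K) :=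
    LinearMap.funLeft K K Subtype.val ∘ₗ Finsupp.lcoeFun ∘ₗ b.repr.toLinearMap ∘ₗ W.subtype
  have hφ : Function.Injective φ := by
    rw [← LinearMap.ker_eq_bot, LinearMap.ker_eq_bot']
    intro w hw
    by_contra hne
    obtain ⟨i, hi⟩ := exists_lead_eq (b := b) (fun h => hne (Subtype.ext h))
    have hmem : i ∈ b.leadSet W := mem_leadSet.mpr ⟨w, w.2, hi⟩
    exact repr_ne_zero_of_lead_eq hi (congrFun hw ⟨i, hmem⟩)
  simpa using LinearMap.finrank_le_finrank_of_injective hφ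

lemma card_leadSet_le_finrank [FiniteDimensional K V] (W : Submodule K V) :
    #(b.leadSet W) ≤ Module.finrank K W := by
  have hex : ∀ i : b.leadSet W, ∃ w : W, b.lead w = i := fun i => by
    obtain ⟨w, hw, hlead⟩ := mem_leadSet.mp i.2
    exact ⟨⟨w, hw⟩, hlead⟩
  choose w hw using hex
  have hli : LinearIndependent K (W.subtype ∘ w) := by
    refine linearIndependent_of_injective_lead (b := b) (fun i h => ?_) (fun i j hij => ?_)
    · exact ne_zero_of_lead_eq (hw i) h
    · simpa [hw] using hij
  simpa using (LinearIndependent.of_comp _ hli).fintype_card_le_finrank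

lemma card_leadSet [FiniteDimensional K V] (W : Submodule K V) :
    #(b.leadSet W) = Module.finrank K W :=
  le_antisymm (card_leadSet_le_finrank W) (finrank_le_card_leadSet W)

end Module.Basis

section VanishingFunctions

variable {ι K : Type*} [Field K] [Fintype ι]

lemma mem_codeSupp {C : Submodule K (ι → K)} {i : ι} :
    i ∈ codeSupp C ↔ ∃ c ∈ C, c i ≠ 0 := by
  simp [codeSupp]

lemma finrank_le_card_of_forall_eq_zero {W : Submodule K (ι → K)} {s : Finset ι}
    (h : ∀ w ∈ W, ∀ i ∉ s, w i = 0) : Module.finrank K W ≤ #s := by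
  let φ : W →ₗ[K] (s → K) := LinearMap.funLeft K K Subtype.val ∘ₗ W.subtype
  have hφ : Function.Injective φ := by
    rw [← LinearMap.ker_eq_bot, LinearMap.ker_eq_bot']
    refine fun w hw => Subtype.ext (funext fun i => ?_)
    by_cases hi : i ∈ s
    · exact congrFun hw ⟨i, hi⟩
    · exact h w w.2 i hi
  simpa using LinearMap.finrank_le_finrank_of_injective hφ

end VanishingFunctions

open Polynomial

section Box

variable {F : Type*} {m : ℕ} (A : Fin m → Finset F)

-- `B_X` inside `Lex`, so that the monomial basis is indexed by a linearly ordered type.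
noncomputable def lexBox : Finset (Lex (Fin m → ℕ)) := (BX A).map toLex.toEmbedding

variable {A}

lemma mem_BX {β : Fin m → ℕ} : β ∈ BX A ↔ ∀ i, β i < #(A i) := by simp [BX]

lemma mem_lexBox {β : Lex (Fin m → ℕ)} : β ∈ lexBox A ↔ ofLex β ∈ BX A := by
  simp [lexBox]

lemma card_BX : #(BX A) = ∏ i, #(A i) := by simp [BX]

lemma card_lexBox : #(lexBox A) = ∏ i, #(A i) := by rw [lexBox, card_map, card_BX]

lemma card_deltaX (N : Set (Fin m → ℕ)) : #(deltaX A N) = ∏ i, #(A i) - #(nablaX A N) := by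
  classical
  rw [← card_BX, ← card_filter_add_card_filter_not (s := BX A) fun β => ∃ a ∈ N, a ≤ β]
  simp [deltaX, nablaX, Pi.le_def]

lemma mem_nablaX {N : Set (Fin m → ℕ)} {β : Fin m → ℕ} :
    β ∈ nablaX A N ↔ β ∈ BX A ∧ ∃ a ∈ N, a ≤ β := by
  simp [nablaX, Pi.le_def]

lemma card_nablaX_le (N : Set (Fin m → ℕ)) : #(nablaX A N) ≤ ∏ i, #(A i) :=
  (card_le_card fun _ hβ => (mem_nablaX.mp hβ).1).trans_eq card_BX

lemma Sle_subset_BX (hA : ∀ i, 2 ≤ #(A i)) (d : ℕ) : Sle m d ⊆ BX A := fun _ ha =>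
  mem_BX.mpr fun i => (ha.1 i).trans_lt (hA i)

variable (A) in
abbrev CartesianSet : Type _ := {P : Fin m → F // ∀ i, P i ∈ A i}

lemma card_cartesianSet [Fintype F] [DecidableEq F] :
    Fintype.card (CartesianSet A) = ∏ i, #(A i) := by
  rw [Fintype.card_congr Equiv.subtypePiEquivPi, Fintype.card_pi]
  simp

noncomputable def boxIndex (P : CartesianSet A) (i : Fin m) : ℕ :=
  (A i).equivFin ⟨P.1 i, P.2 i⟩

lemma boxIndex_mem_BX (P : CartesianSet A) : boxIndex P ∈ BX A :=
  mem_BX.mpr fun i => ((A i).equivFin _).2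

lemma boxIndex_injective : Function.Injective (boxIndex (A := A)) := fun P Q h =>
  Subtype.ext <| funext fun i => by
    simpa using (A i).equivFin.injective (Fin.ext (congrFun h i))

noncomputable def basePoint (hA : ∀ i, (A i).Nonempty) (i : Fin m) : F :=
  (A i).equivFin.symm ⟨0, (hA i).card_pos⟩

lemma boxIndex_pos_of_ne_basePoint (hA : ∀ i, (A i).Nonempty) {P : CartesianSet A}
    {i : Fin m} (h : P.1 i ≠ basePoint hA i) : 0 < boxIndex P i := by
  refine Nat.pos_of_ne_zero fun h0 => h ?_
  have hidx : (A i).equivFin ⟨P.1 i, P.2 i⟩ = ⟨0, (hA i).card_pos⟩ := Fin.ext h0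
  rw [basePoint, ← hidx, Equiv.symm_apply_apply]

end Box

section CartesianSet

variable {F : Type*} [Field F] {m : ℕ} (A : Fin m → Finset F)

def evalMonomial (δ : Fin m → ℕ) (P : CartesianSet A) : F := ∏ i, P.1 i ^ δ i

noncomputable def evalProd (L : Fin m → F[X]) (P : CartesianSet A) : F :=
  ∏ i, (L i).eval (P.1 i)

variable {A}

lemma evalMonomial_add (γ δ : Fin m → ℕ) :
    evalMonomial A (γ + δ) = evalMonomial A γ * evalMonomial A δ := by
  funext P
  simp [evalMonomial, pow_add, prod_mul_distrib]

lemma evalProd_eq_sum {L : Fin m → F[X]} (hL : ∀ i, (L i).natDegree < #(A i)) :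
    evalProd A L =
      ∑ β : lexBox A, (∏ i, (L i).coeff (ofLex β.1 i)) • evalMonomial A (ofLex β.1) := by
  funext P
  have hL' : ∀ i, (L i).eval (P.1 i) = ∑ k ∈ range #(A i), (L i).coeff k * P.1 i ^ k :=
    fun i => eval_eq_sum_range' (hL i) _
  simp only [evalProd, hL', prod_univ_sum, Finset.sum_apply, Pi.smul_apply, smul_eq_mul,
    evalMonomial, ← prod_mul_distrib]
  rw [Finset.sum_coe_sort (lexBox A)
    (fun β => ∏ i, (L i).coeff (ofLex β i) * P.1 i ^ ofLex β i), lexBox, sum_map]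
  rfl

lemma evalMonomial_eq_evalProd (δ : Fin m → ℕ) :
    evalMonomial A δ = evalProd A (fun i => X ^ δ i %ₘ Lagrange.nodal (A i) id) := by
  funext P
  refine prod_congr rfl fun i _ => ?_
  have hroot : (Lagrange.nodal (A i) id).eval (P.1 i) = 0 :=
    Lagrange.eval_nodal_at_node (v := id) (P.2 i)
  rw [eval, eval₂_modByMonic_eq_self_of_root hroot, eval₂_X_pow]

variable [DecidableEq F]

lemma pi_single_eq_evalProd (P₀ : CartesianSet A) :
    Pi.single P₀ 1 = evalProd A (fun i => Lagrange.basis (A i) id (P₀.1 i)) := by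
  funext P
  by_cases hP : P = P₀
  · subst hP
    rw [Pi.single_eq_same, evalProd]
    exact (prod_eq_one fun i _ =>
      Lagrange.eval_basis_self (v := id) (Set.injOn_id _) (P.2 i)).symm
  · obtain ⟨i, hi⟩ : ∃ i, P.1 i ≠ P₀.1 i := by
      by_contra! h
      exact hP (Subtype.ext (funext h))
    rw [Pi.single_apply, if_neg hP, evalProd]
    exact (prod_eq_zero (mem_univ i)
      (Lagrange.eval_basis_of_ne (v := id) hi.symm (P.2 i))).symm

variable [Fintype F]

lemma top_le_span_evalMonomial :
    ⊤ ≤ Submodule.span F (Set.range fun β : lexBox A => evalMonomial A (ofLex β.1)) := by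
  rw [← (Pi.basisFun F (CartesianSet A)).span_eq, Submodule.span_le]
  rintro _ ⟨P₀, rfl⟩
  have hdeg : ∀ i, (Lagrange.basis (A i) id (P₀.1 i)).natDegree < #(A i) := fun i => by
    rw [Lagrange.natDegree_basis (Set.injOn_id _) (P₀.2 i)]
    exact Nat.sub_lt (card_pos.mpr ⟨_, P₀.2 i⟩) one_pos
  rw [Pi.basisFun_apply, pi_single_eq_evalProd, evalProd_eq_sum hdeg]
  exact Submodule.sum_mem _ fun β _ => Submodule.smul_mem _ _ (Submodule.subset_span ⟨β, rfl⟩)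

variable (A) in
noncomputable def monomialBasis : Module.Basis (lexBox A) F (CartesianSet A → F) :=
  basisOfTopLeSpanOfCardEqFinrank _ top_le_span_evalMonomial <| by
    rw [Fintype.card_coe, card_lexBox, Module.finrank_fintype_fun_eq_card, card_cartesianSet]

lemma monomialBasis_apply (β : lexBox A) :
    monomialBasis A β = evalMonomial A (ofLex β.1) := by
  simp [monomialBasis]

end CartesianSet

section MonomialBasis

variable {F : Type*} [Field F] [Fintype F] [DecidableEq F] {m : ℕ} {A : Fin m → Finset F}

lemma repr_evalProd {L : Fin m → F[X]} (hL : ∀ i, (L i).natDegree < #(A i)) (β : lexBox A) :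
    (monomialBasis A).repr (evalProd A L) β = ∏ i, (L i).coeff (ofLex β.1 i) := by
  simp_rw [evalProd_eq_sum hL, ← monomialBasis_apply, Module.Basis.repr_sum_self]

lemma repr_evalMonomial (β : lexBox A) :
    (monomialBasis A).repr (evalMonomial A (ofLex β.1)) = Finsupp.single β 1 := by
  rw [← monomialBasis_apply, Module.Basis.repr_self]

lemma le_of_repr_evalMonomial_ne_zero {δ : Fin m → ℕ} {β : lexBox A}
    (h : (monomialBasis A).repr (evalMonomial A δ) β ≠ 0) : ofLex β.1 ≤ δ := by
  have hdeg : ∀ i, (X ^ δ i %ₘ Lagrange.nodal (A i) id).natDegree < #(A i) := fun i => by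
    have hpos : 0 < #(A i) := (mem_BX.mp (mem_lexBox.mp β.2) i).pos
    have hne : Lagrange.nodal (A i) id ≠ 1 := fun h1 => by
      have := Lagrange.natDegree_nodal (s := A i) (v := id)
      rw [h1, natDegree_one] at this
      omega
    simpa [Lagrange.natDegree_nodal] using
      natDegree_modByMonic_lt (X ^ δ i) Lagrange.nodal_monic hne
  rw [evalMonomial_eq_evalProd, repr_evalProd hdeg] at h
  intro i
  calc ofLex β.1 i ≤ (X ^ δ i %ₘ Lagrange.nodal (A i) id).natDegree :=
        le_natDegree_of_ne_zero (prod_ne_zero_iff.mp h i (mem_univ i))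
    _ ≤ (X ^ δ i : F[X]).natDegree := natDegree_modByMonic_le_left
    _ = δ i := natDegree_X_pow _

open Module.Basis in
lemma lead_evalMonomial_mul {c : CartesianSet A → F} {a β : lexBox A}
    (hc : (monomialBasis A).lead c = a) (hle : ofLex a.1 ≤ ofLex β.1) :
    (monomialBasis A).lead (evalMonomial A (ofLex β.1 - ofLex a.1) * c) = β := by
  set b := monomialBasis A
  set γ := ofLex β.1 - ofLex a.1
  have hβ : β.1 = toLex γ + a.1 := by
    rw [← toLex_ofLex a.1, ← toLex_add, tsub_add_cancel_of_le hle, toLex_ofLex]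
  have hrepr : ∀ k, b.repr (evalMonomial A γ * c) k =
      ∑ j, b.repr c j * b.repr (evalMonomial A (γ + ofLex j.1)) k := fun k => by
    conv_lhs => rw [← b.sum_repr c]
    simp [b, Finset.mul_sum, evalMonomial_add, monomialBasis_apply, Finsupp.finsetSum_apply]
  have key : ∀ j k, b.repr c j ≠ 0 → b.repr (evalMonomial A (γ + ofLex j.1)) k ≠ 0 →
      k ≤ β ∧ (k = β → j = a) := fun j k hj hk => by
    have hja : j ≤ a := WithBot.coe_le_coe.mp (hc ▸ le_lead_of_repr_ne_zero hj)
    have hk : k.1 ≤ toLex γ + j.1 := by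
      simpa [toLex_add] using Pi.toLex_monotone (le_of_repr_evalMonomial_ne_zero hk)
    have hkβ : k.1 ≤ β.1 := hβ ▸ hk.trans (add_le_add le_rfl (Subtype.coe_le_coe.mpr hja))
    refine ⟨Subtype.coe_le_coe.mp hkβ, ?_⟩
    rintro rfl
    exact Subtype.ext (le_antisymm hja (le_of_add_le_add_left (hβ ▸ hk)))
  refine lead_eq_of_repr ?_ fun k hk => ?_
  · rw [hrepr, sum_eq_single a]
    · rw [tsub_add_cancel_of_le hle, repr_evalMonomial, Finsupp.single_eq_same, mul_one]
      exact repr_ne_zero_of_lead_eq hc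
    · intro j _ hja
      by_contra h
      exact hja ((key j β (left_ne_zero_of_mul h) (right_ne_zero_of_mul h)).2 rfl)
    · simp
  · rw [hrepr] at hk
    obtain ⟨j, _, hj⟩ := exists_ne_zero_of_sum_ne_zero hk
    exact (key j k (left_ne_zero_of_mul hj) (right_ne_zero_of_mul hj)).1

lemma mem_evalCodeX_iff {S : Set (Fin m → ℕ)} (hS : S ⊆ BX A) {c : CartesianSet A → F} :
    c ∈ evalCodeX A S ↔ ∀ β, (monomialBasis A).repr c β ≠ 0 → ofLex β.1 ∈ S := by
  have himage : (fun a (P : CartesianSet A) => ∏ i, P.1 i ^ a i) '' S =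
      monomialBasis A '' {β | ofLex β.1 ∈ S} := by
    ext f
    constructor
    · rintro ⟨a, ha, rfl⟩
      exact ⟨⟨toLex a, mem_lexBox.mpr (hS ha)⟩, ha, monomialBasis_apply _⟩
    · rintro ⟨β, hβ, rfl⟩
      exact ⟨ofLex β.1, hβ, (monomialBasis_apply β).symm⟩
  rw [evalCodeX, himage, Module.Basis.mem_span_image]
  simp [Set.subset_def]

end MonomialBasis

section Footprint

variable {F : Type*} [Field F] [Fintype F] [DecidableEq F] {m : ℕ} {A : Fin m → Finset F}

open Module.Basis

noncomputable def leadExponents (C : Submodule F (CartesianSet A → F)) : Finset (Fin m → ℕ) :=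
  ((monomialBasis A).leadSet C).image fun β => ofLex β.1

lemma card_leadExponents (C : Submodule F (CartesianSet A → F)) :
    #(leadExponents C) = Module.finrank F C := by
  rw [leadExponents, card_image_of_injective _ fun β β' h => Subtype.ext (ofLex_inj.mp h),
    card_leadSet]

lemma leadExponents_subset {S : Set (Fin m → ℕ)} (hS : S ⊆ BX A)
    {C : Submodule F (CartesianSet A → F)} (hC : C ≤ evalCodeX A S) :
    ↑(leadExponents C) ⊆ S := by
  intro a ha
  obtain ⟨β, hβ, rfl⟩ := mem_image.mp ha
  obtain ⟨c, hc, hlead⟩ := mem_leadSet.mp hβ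
  exact (mem_evalCodeX_iff hS).mp (hC hc) β (repr_ne_zero_of_lead_eq hlead)

lemma card_nablaX_leadExponents_le (C : Submodule F (CartesianSet A → F)) :
    #(nablaX A ↑(leadExponents C)) ≤ #(codeSupp C) := by
  classical
  let W : Submodule F (CartesianSet A → F) := Submodule.pi (↑(codeSupp C))ᶜ fun _ => ⊥
  have hW : ∀ w ∈ W, ∀ P ∉ codeSupp C, w P = 0 := fun w hw P hP =>
    (Submodule.mem_bot F).mp (Submodule.mem_pi.mp hw P hP)
  have hsub : nablaX A ↑(leadExponents C) ⊆
      ((monomialBasis A).leadSet W).image fun β => ofLex β.1 := by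
    intro β hβ
    obtain ⟨hβbox, a, ha, hle⟩ := mem_nablaX.mp hβ
    obtain ⟨j, hj, rfl⟩ := mem_image.mp ha
    obtain ⟨c, hc, hlead⟩ := mem_leadSet.mp hj
    let β' : lexBox A := ⟨toLex β, mem_lexBox.mpr hβbox⟩
    refine mem_image.mpr
      ⟨β', mem_leadSet.mpr ⟨_, ?_, lead_evalMonomial_mul hlead (β := β') hle⟩, rfl⟩
    refine Submodule.mem_pi.mpr fun P hP => (Submodule.mem_bot F).mpr ?_
    have hcP : c P = 0 := by
      by_contra h
      exact hP (mem_codeSupp.mpr ⟨c, hc, h⟩)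
    rw [Pi.mul_apply, hcP, mul_zero]
  calc #(nablaX A ↑(leadExponents C)) ≤ #((monomialBasis A).leadSet W) :=
        (card_le_card hsub).trans card_image_le
    _ = Module.finrank F W := card_leadSet W
    _ ≤ #(codeSupp C) := finrank_le_card_of_forall_eq_zero hW

end Footprint

section ShiftedMonomial

variable {F : Type*} [Field F] {m : ℕ} {A : Fin m → Finset F}

variable (A) in
noncomputable def shiftedMonomial (t : Fin m → F) (a : Fin m → ℕ) : CartesianSet A → F :=
  evalProd A fun i => (X - C (t i)) ^ a i

lemma le_boxIndex_of_shiftedMonomial_ne_zero (hA : ∀ i, (A i).Nonempty) {a : Fin m → ℕ}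
    (ha : ∀ i, a i ≤ 1) {P : CartesianSet A} (h : shiftedMonomial A (basePoint hA) a P ≠ 0) :
    a ≤ boxIndex P := by
  simp only [shiftedMonomial, evalProd] at h
  intro i
  have hi := prod_ne_zero_iff.mp h i (mem_univ i)
  rcases Nat.le_one_iff_eq_zero_or_eq_one.mp (ha i) with h0 | h1
  · simp [h0]
  · rw [h1] at hi ⊢
    exact boxIndex_pos_of_ne_basePoint hA (by simpa [sub_eq_zero] using hi)

variable [Fintype F] [DecidableEq F]

lemma repr_shiftedMonomial (t : Fin m → F) {a : Fin m → ℕ} (ha : a ∈ BX A) (β : lexBox A) :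
    (monomialBasis A).repr (shiftedMonomial A t a) β =
      ∏ i, ((X - C (t i)) ^ a i).coeff (ofLex β.1 i) :=
  repr_evalProd (fun i => by simpa using mem_BX.mp ha i) β

lemma le_of_repr_shiftedMonomial_ne_zero {t : Fin m → F} {a : Fin m → ℕ} (ha : a ∈ BX A)
    {β : lexBox A} (h : (monomialBasis A).repr (shiftedMonomial A t a) β ≠ 0) :
    ofLex β.1 ≤ a := by
  rw [repr_shiftedMonomial t ha] at h
  intro i
  simpa using le_natDegree_of_ne_zero (prod_ne_zero_iff.mp h i (mem_univ i))

lemma lead_shiftedMonomial (t : Fin m → F) {a : Fin m → ℕ} (ha : a ∈ BX A) :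
    (monomialBasis A).lead (shiftedMonomial A t a) =
      (⟨toLex a, mem_lexBox.mpr ha⟩ : lexBox A) := by
  refine Module.Basis.lead_eq_of_repr ?_ fun β hβ => ?_
  · rw [repr_shiftedMonomial t ha]
    refine prod_ne_zero_iff.mpr fun i _ => ?_
    have hmonic := ((monic_X_sub_C (t i)).pow (a i)).coeff_natDegree
    rw [natDegree_pow, natDegree_X_sub_C, mul_one] at hmonic
    rw [ofLex_toLex, hmonic]
    exact one_ne_zero
  · exact Subtype.coe_le_coe.mp (Pi.toLex_monotone (le_of_repr_shiftedMonomial_ne_zero ha hβ))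

lemma shiftedMonomial_mem_evalCodeX (hA : ∀ i, 2 ≤ #(A i)) (t : Fin m → F) {d : ℕ}
    {a : Fin m → ℕ} (ha : a ∈ Sle m d) : shiftedMonomial A t a ∈ evalCodeX A (Sle m d) := by
  refine (mem_evalCodeX_iff (Sle_subset_BX hA d)).mpr fun β hβ => ?_
  have hle := le_of_repr_shiftedMonomial_ne_zero (Sle_subset_BX hA d ha) hβ
  exact ⟨fun i => (hle i).trans (ha.1 i), (sum_le_sum fun i _ => hle i).trans ha.2⟩

lemma exists_subcode_card_codeSupp_le (hA : ∀ i, 2 ≤ #(A i)) {d : ℕ}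
    {N : Finset (Fin m → ℕ)} (hN : ↑N ⊆ Sle m d) :
    ∃ C ≤ evalCodeX A (Sle m d),
      Module.finrank F C = #N ∧ #(codeSupp C) ≤ #(nablaX A ↑N) := by
  have hne : ∀ i, (A i).Nonempty := fun i => card_pos.mp (by have := hA i; omega)
  have hBX : ∀ a : N, a.1 ∈ BX A := fun a => Sle_subset_BX hA d (hN a.2)
  let f : N → CartesianSet A → F := fun a => shiftedMonomial A (basePoint hne) a.1
  have hlead : ∀ a, (monomialBasis A).lead (f a) =
      (⟨toLex a.1, mem_lexBox.mpr (hBX a)⟩ : lexBox A) :=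
    fun a => lead_shiftedMonomial _ (hBX a)
  have hli : LinearIndependent F f :=
    Module.Basis.linearIndependent_of_injective_lead (b := monomialBasis A)
      (fun a => Module.Basis.ne_zero_of_lead_eq (hlead a)) fun a a' h => by
        simp only [Function.comp_apply, hlead, WithBot.coe_inj, Subtype.mk.injEq, toLex_inj] at h
        exact Subtype.ext h
  refine ⟨Submodule.span F (Set.range f), Submodule.span_le.mpr <| Set.range_subset_iff.mpr
    fun a => shiftedMonomial_mem_evalCodeX hA _ (hN a.2),
    by rw [finrank_span_eq_card hli, Fintype.card_coe], ?_⟩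
  refine card_le_card_of_injOn boxIndex (fun P hP => ?_) boxIndex_injective.injOn
  obtain ⟨c, hc, hcP⟩ := mem_codeSupp.mp hP
  obtain ⟨a, haP⟩ : ∃ a, f a P ≠ 0 := by
    by_contra! h
    exact hcP ((Submodule.span_le (p := LinearMap.ker (LinearMap.proj P))).mpr
      (Set.range_subset_iff.mpr h) hc)
  exact mem_nablaX.mpr
    ⟨boxIndex_mem_BX P, a, a.2, le_boxIndex_of_shiftedMonomial_ne_zero hne (hN a.2).1 haP⟩

end ShiftedMonomial

lemma exists_subset_Sle_card_eq {m d r : ℕ} (hr : r ≤ ∑ i ∈ range (d + 1), m.choose i) :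
    ∃ N : Finset (Fin m → ℕ), ↑N ⊆ Sle m d ∧ #N = r := by
  let U : Finset (Finset (Fin m)) := (range (d + 1)).disjiUnion (powersetCard · univ)
    ((pairwise_disjoint_powersetCard univ).set_pairwise _)
  let ind : Finset (Fin m) → Fin m → ℕ := fun s i => if i ∈ s then 1 else 0
  have hind : Function.Injective ind := fun s s' h => Finset.ext fun i => by
    have hi := congrFun h i
    simp only [ind] at hi
    split_ifs at hi <;> simp_all
  have hU : #(U.image ind) = ∑ i ∈ range (d + 1), m.choose i := by
    rw [card_image_of_injective _ hind, show #U = _ from card_disjiUnion _ _ _]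
    simp
  obtain ⟨N, hNU, hN⟩ := exists_subset_card_eq (hr.trans hU.ge)
  refine ⟨N, fun a ha => ?_, hN⟩
  obtain ⟨s, hs, rfl⟩ := mem_image.mp (hNU ha)
  obtain ⟨i, hi, hs⟩ := mem_disjiUnion.mp hs
  refine ⟨fun j => by by_cases hj : j ∈ s <;> simp [ind, hj], ?_⟩
  simpa [ind, (mem_powersetCard.mp hs).2] using Nat.le_of_lt_succ (mem_range.mp hi)

lemma sSup_card_deltaX {F : Type*} {m : ℕ} (A : Fin m → Finset F)
    (p : Finset (Fin m → ℕ) → Prop) (hp : ∃ N, p N) :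
    sSup {k | ∃ N, p N ∧ #(deltaX A ↑N) = k} =
      ∏ i, #(A i) - sInf {k | ∃ N, p N ∧ #(nablaX A ↑N) = k} := by
  set S := {k | ∃ N, p N ∧ #(nablaX A ↑N) = k}
  obtain ⟨N₀, hN₀, hinf⟩ := Nat.sInf_mem (s := S) (hp.elim fun N hN => ⟨_, N, hN, rfl⟩)
  have hbdd : BddAbove {k | ∃ N, p N ∧ #(deltaX A ↑N) = k} := by
    refine ⟨∏ i, #(A i), ?_⟩
    rintro _ ⟨N, -, rfl⟩
    rw [card_deltaX]
    exact tsub_le_self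
  refine le_antisymm (csSup_le ⟨_, N₀, hN₀, rfl⟩ ?_) ?_
  · rintro _ ⟨N, hN, rfl⟩
    rw [card_deltaX]
    exact tsub_le_tsub_left (Nat.sInf_le (s := S) ⟨N, hN, rfl⟩) _
  · refine le_csSup hbdd ?_
    exact ⟨N₀, hN₀, by rw [card_deltaX, hinf]⟩

theorem ghw_cartesian_squarefree_leq_d_eq_footprint_general
    {F : Type*} [Field F] [Fintype F] [DecidableEq F] {m d r : ℕ}
    (A : Fin m → Finset F)
    (hcard : ∀ i, 2 ≤ (A i).card)
    (hr2 : r ≤ ∑ i ∈ Finset.range (d + 1), m.choose i) :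
    GHW (evalCodeX A (Sle m d)) r =
      (∏ i, (A i).card) -
        sSup {k | ∃ N : Finset (Fin m → ℕ),
          ↑N ⊆ Sle m d ∧ N.card = r ∧ (deltaX A ↑N).card = k} ∧
    GHW (evalCodeX A (Sle m d)) r =
      sInf {k | ∃ N : Finset (Fin m → ℕ),
        ↑N ⊆ Sle m d ∧ N.card = r ∧ (nablaX A ↑N).card = k} := by
  have hghw : GHW (evalCodeX A (Sle m d)) r = sInf {k | ∃ N : Finset (Fin m → ℕ),
      ↑N ⊆ Sle m d ∧ N.card = r ∧ (nablaX A ↑N).card = k} := by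
    refine csInf_eq_csInf_of_forall_exists_le ?_ ?_
    · rintro _ ⟨C, hC, hCr, rfl⟩
      exact ⟨_, ⟨leadExponents C, leadExponents_subset (Sle_subset_BX hcard d) hC,
        (card_leadExponents C).trans hCr, rfl⟩, card_nablaX_leadExponents_le C⟩
    · rintro _ ⟨N, hN, hNr, rfl⟩
      obtain ⟨C, hC, hCr, hsupp⟩ := exists_subcode_card_codeSupp_le hcard hN
      exact ⟨_, ⟨C, hC, hCr.trans hNr, rfl⟩, hsupp⟩
  obtain ⟨N, hN, hNr⟩ := exists_subset_Sle_card_eq hr2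
  have hsup := sSup_card_deltaX A (fun N => ↑N ⊆ Sle m d ∧ #N = r) ⟨N, hN, hNr⟩
  simp only [and_assoc] at hsup
  refine ⟨?_, hghw⟩
  rw [hsup, hghw, Nat.sub_sub_self]
  exact le_trans (Nat.sInf_le ⟨N, hN, hNr, rfl⟩) (card_nablaX_le _)

/-- For a Cartesian set `X = A_1 × ⋯ × A_m` over `F_q`, `0 ≤ d ≤ m` and
`1 ≤ r ≤ Σ_{i=0}^{d} C(m,i)`, the `r`-th generalized Hamming weight of the Cartesian
square-free code `C_{≤d}^{X,S}` equals `n_1⋯n_m − max{|Δ_X(N)| : N ⊆ S_{≤d}(m), |N| = r}`,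
which also equals `min{|∇_X(N)| : N ⊆ S_{≤d}(m), |N| = r}`. -/
theorem ghw_cartesian_squarefree_leq_d_eq_footprint
    {F : Type*} [Field F] [Fintype F] [DecidableEq F] {m d r : ℕ}
    (A : Fin m → Finset F)
    (hcard : ∀ i, 2 ≤ (A i).card)
    (hmono : ∀ i j : Fin m, i ≤ j → (A i).card ≤ (A j).card)
    (hdm : d ≤ m) (hr1 : 1 ≤ r)
    (hr2 : r ≤ ∑ i ∈ Finset.range (d + 1), m.choose i) :
    GHW (evalCodeX A (Sle m d)) r =
      (∏ i, (A i).card) -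
        sSup {k | ∃ N : Finset (Fin m → ℕ),
          ↑N ⊆ Sle m d ∧ N.card = r ∧ (deltaX A ↑N).card = k} ∧
    GHW (evalCodeX A (Sle m d)) r =
      sInf {k | ∃ N : Finset (Fin m → ℕ),
        ↑N ⊆ Sle m d ∧ N.card = r ∧ (nablaX A ↑N).card = k} :=
  ghw_cartesian_squarefree_leq_d_eq_footprint_general A hcard hr2
end

section
/- Let X = A_1 × ⋯ × A_m be a Cartesian set over F_q with 0 ∈ A_i for all 1 ≤ i ≤ m, let 1 ≤ d ≤ m, let 1 ≤ r ≤ C(m,d), and let M = {α_1,…,α_r} ⊆ S_d(m) be a set of r distinct exponent vectors. Then the number of points P ∈ X at which all the monomials x^{α_1},…,x^{α_r} vanish equals |Δ_X(M)|; that is, |{P ∈ X : x^{α_i}(P) = 0 for all 1 ≤ i ≤ r}| = |{β ∈ B_X : no α ∈ M satisfies α_i ≤ β_i for all i}|. -/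
namespace Finset

variable {α : Type*} (s : Finset α) {a : α} (ha : a ∈ s)

noncomputable def equivFinOfMem : s ≃ Fin s.card :=
  s.equivFin.trans (Equiv.swap (s.equivFin ⟨a, ha⟩) ⟨0, card_pos.2 ⟨a, ha⟩⟩)

theorem equivFinOfMem_self : s.equivFinOfMem ha ⟨a, ha⟩ = ⟨0, card_pos.2 ⟨a, ha⟩⟩ := by
  simp [equivFinOfMem]

theorem val_equivFinOfMem_eq_zero_iff (x : s) :
    (s.equivFinOfMem ha x : ℕ) = 0 ↔ (x : α) = a := by
  calc (s.equivFinOfMem ha x : ℕ) = 0 ↔ s.equivFinOfMem ha x = s.equivFinOfMem ha ⟨a, ha⟩ := by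
        rw [equivFinOfMem_self, Fin.ext_iff]
    _ ↔ (x : α) = a := by rw [(s.equivFinOfMem ha).injective.eq_iff, Subtype.ext_iff]

end Finset

theorem prod_pow_eq_zero_iff_not_le {ι M₀ : Type*} [Fintype ι] [CommMonoidWithZero M₀]
    [NoZeroDivisors M₀] [Nontrivial M₀] {x : ι → M₀} {a b : ι → ℕ} (ha : ∀ i, a i ≤ 1)
    (hb : ∀ i, b i = 0 ↔ x i = 0) : ∏ i, x i ^ a i = 0 ↔ ¬ ∀ i, a i ≤ b i := by
  simp only [Finset.prod_eq_zero_iff, Finset.mem_univ, true_and, pow_eq_zero_iff', ← hb,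
    not_forall, not_le]
  exact exists_congr fun i => by have := ha i; omega

section Cartesian

variable {F : Type*} {m : ℕ} {A : Fin m → Finset F} {c : Fin m → F} (hc : ∀ i, c i ∈ A i)

noncomputable def cartesianEquivBX : {P : Fin m → F // ∀ i, P i ∈ A i} ≃ BX A where
  toFun P := ⟨fun i => (A i).equivFinOfMem (hc i) ⟨P.1 i, P.2 i⟩, by simp [BX]⟩
  invFun b := ⟨fun i => ((A i).equivFinOfMem (hc i)).symm
      ⟨b.1 i, by simpa using Fintype.mem_piFinset.1 b.2 i⟩, fun i => Subtype.prop _⟩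
  left_inv P := by ext; simp
  right_inv b := by ext; simp

theorem cartesianEquivBX_apply_eq_zero_iff (P : {P : Fin m → F // ∀ i, P i ∈ A i}) (i : Fin m) :
    (cartesianEquivBX hc P : Fin m → ℕ) i = 0 ↔ P.1 i = c i :=
  (A i).val_equivFinOfMem_eq_zero_iff (hc i) _

open Classical in
theorem card_filter_cartesianEquivBX_eq_card_deltaX [Fintype F] (N : Set (Fin m → ℕ)) :
    (Finset.univ.filter fun P : {P : Fin m → F // ∀ i, P i ∈ A i} =>
        ¬ ∃ a ∈ N, ∀ i, a i ≤ (cartesianEquivBX hc P : Fin m → ℕ) i).card =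
      (deltaX A N).card := by
  refine Finset.card_bij (fun P _ => cartesianEquivBX hc P) (fun P hP => ?_)
    (fun P _ Q _ h => (cartesianEquivBX hc).injective (Subtype.ext h)) (fun b hb => ?_)
  · exact Finset.mem_filter.2 ⟨(cartesianEquivBX hc P).2, (Finset.mem_filter.1 hP).2⟩
  · obtain ⟨hbB, hbN⟩ := Finset.mem_filter.1 hb
    exact ⟨(cartesianEquivBX hc).symm ⟨b, hbB⟩, by simpa using hbN, by simp⟩

end Cartesian

theorem card_common_zeros_eq_card_deltaX_general
    {F : Type*} [Field F] [Fintype F] [DecidableEq F] {m d : ℕ}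
    (A : Fin m → Finset F)
    (h0 : ∀ i, (0 : F) ∈ A i)
    (M : Finset (Fin m → ℕ)) (hM : ↑M ⊆ Sd m d) :
    (Finset.univ.filter (fun P : {P : Fin m → F // ∀ i, P i ∈ A i} =>
        ∀ a ∈ M, ∏ j, P.1 j ^ a j = 0)).card = (deltaX A ↑M).card := by
  rw [← card_filter_cartesianEquivBX_eq_card_deltaX (c := fun _ => 0) h0]
  congr 1
  ext P
  simp only [Finset.mem_filter, Finset.mem_univ, true_and, Finset.mem_coe, not_exists, not_and]
  exact forall₂_congr fun a ha =>
    prod_pow_eq_zero_iff_not_le (hM ha).1 (cartesianEquivBX_apply_eq_zero_iff h0 P)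

/-- Let `X = A_1 × ⋯ × A_m` be a Cartesian set over `F_q` with `0 ∈ A_i`
for all `i`, `1 ≤ d ≤ m`, `1 ≤ r ≤ C(m,d)`, and let `M ⊆ S_d(m)` with `|M| = r`. Then the
number of points of `X` at which all the monomials `x^a`, `a ∈ M`, vanish equals
`|Δ_X(M)|`. -/
theorem card_common_zeros_eq_card_deltaX
    {F : Type*} [Field F] [Fintype F] [DecidableEq F] {m d r : ℕ}
    (A : Fin m → Finset F)
    (hcard : ∀ i, 2 ≤ (A i).card)
    (hmono : ∀ i j : Fin m, i ≤ j → (A i).card ≤ (A j).card)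
    (h0 : ∀ i, (0 : F) ∈ A i)
    (hd1 : 1 ≤ d) (hdm : d ≤ m) (hr1 : 1 ≤ r) (hr2 : r ≤ m.choose d)
    (M : Finset (Fin m → ℕ)) (hM : ↑M ⊆ Sd m d) (hMcard : M.card = r) :
    (Finset.univ.filter (fun P : {P : Fin m → F // ∀ i, P i ∈ A i} =>
        ∀ a ∈ M, ∏ j, P.1 j ^ a j = 0)).card = (deltaX A ↑M).card :=
  card_common_zeros_eq_card_deltaX_general A h0 M hM
end

section
/- Let X = A_1 × ⋯ × A_m be a Cartesian set over F_q with 0 ∈ A_i for all 1 ≤ i ≤ m, let 1 ≤ d ≤ m, and let 1 ≤ r ≤ C(m,d). Then the r-th generalized Hamming weight of the Cartesian square-free code C_d^{X,S} satisfies d_r(C_d^{X,S}) = n_1⋯n_m − max{|Δ_X(N)| : N ⊆ S_d(m), |N| = r} = min{|∇_X(N)| : N ⊆ S_d(m), |N| = r}. -/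
namespace SFC
set_option linter.unusedSectionVars false

variable {F : Type*} [Field F] {m : ℕ}

abbrev XT (A : Fin m → Finset F) := {P : Fin m → F // ∀ i, P i ∈ A i}

def mono (A : Fin m → Finset F) (e : Fin m → ℕ) : XT A → F :=
  fun P => ∏ i, P.1 i ^ e i

lemma mono_mul (A : Fin m → Finset F) (e f : Fin m → ℕ) :
    mono A e * mono A f = mono A (e + f) := by
  funext P
  simp [mono, ← Finset.prod_mul_distrib, pow_add]

lemma mem_BX_iff {A : Fin m → Finset F} {b : Fin m → ℕ} :
    b ∈ BX A ↔ ∀ i, b i < (A i).card := by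
  simp [BX, Fintype.mem_piFinset]

/-- weight base -/
def K (A : Fin m → Finset F) : ℕ := (Finset.univ.sup fun i => (A i).card) + 1

lemma card_lt_K (A : Fin m → Finset F) (i : Fin m) : (A i).card < K A :=
  Nat.lt_succ_of_le (Finset.le_sup (f := fun i => (A i).card) (Finset.mem_univ i))

/-- additive weight giving a monomial order on the box -/
def w (A : Fin m → Finset F) (b : Fin m → ℕ) : ℕ := ∑ i, b i * K A ^ (i : ℕ)

lemma w_add (A : Fin m → Finset F) (a b : Fin m → ℕ) : w A (a + b) = w A a + w A b := by
  simp [w, add_mul, Finset.sum_add_distrib]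

lemma w_mono (A : Fin m → Finset F) {a b : Fin m → ℕ} (h : a ≤ b) : w A a ≤ w A b :=
  Finset.sum_le_sum fun i _ => Nat.mul_le_mul_right _ (h i)

lemma w_strict (A : Fin m → Finset F) {a b : Fin m → ℕ} (h : a ≤ b) (hne : a ≠ b) :
    w A a < w A b := by
  obtain ⟨i, hi⟩ : ∃ i, a i ≠ b i := by
    by_contra hc
    push_neg at hc
    exact hne (funext hc)
  refine Finset.sum_lt_sum (fun j _ => Nat.mul_le_mul_right _ (h j)) ⟨i, Finset.mem_univ i, ?_⟩
  have : a i < b i := lt_of_le_of_ne (h i) hi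
  have hKpos : 0 < K A ^ (i : ℕ) := Nat.pow_pos (Nat.succ_pos _)
  exact (Nat.mul_lt_mul_right hKpos).mpr this

/-- injectivity of the weight on `K`-bounded vectors -/
lemma w_inj_aux : ∀ (m : ℕ) (KK : ℕ) (a b : Fin m → ℕ), (∀ i, a i < KK) → (∀ i, b i < KK) →
    (∑ i, a i * KK ^ (i : ℕ)) = (∑ i, b i * KK ^ (i : ℕ)) → a = b := by
  intro m
  induction m with
  | zero => intro KK a b _ _ _; funext i; exact absurd i.2 (Nat.not_lt_zero _)
  | succ n ih =>
    intro KK a b ha hb hsum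
    rw [Fin.sum_univ_succ, Fin.sum_univ_succ] at hsum
    have hre : ∀ c : Fin (n+1) → ℕ,
        (∑ i : Fin n, c i.succ * KK ^ ((i.succ : Fin (n+1)) : ℕ)) =
          KK * ∑ i : Fin n, c i.succ * KK ^ (i : ℕ) := by
      intro c
      rw [Finset.mul_sum]
      refine Finset.sum_congr rfl fun i _ => ?_
      rw [Fin.val_succ, pow_succ]
      ring
    rw [hre a, hre b] at hsum
    simp only [Fin.val_zero, pow_zero, mul_one] at hsum
    have h0 : a 0 = b 0 := by
      have := congrArg (· % KK) hsum
      simpa [Nat.add_mul_mod_self_left, Nat.mod_eq_of_lt (ha 0), Nat.mod_eq_of_lt (hb 0)]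
        using this
    have htail : (∑ i : Fin n, a i.succ * KK ^ (i : ℕ)) = ∑ i : Fin n, b i.succ * KK ^ (i : ℕ) := by
      have hK : 0 < KK := Nat.pos_of_ne_zero (by rintro rfl; exact absurd (ha 0) (by simp))
      have := hsum
      rw [h0] at this
      have h2 := Nat.add_left_cancel this
      exact Nat.eq_of_mul_eq_mul_left hK h2
    have hih := ih KK (fun i => a i.succ) (fun i => b i.succ) (fun i => ha _) (fun i => hb _) htail
    funext i
    refine Fin.cases h0 (fun j => ?_) i
    exact congrFun hih j

lemma univariate (A : Fin m → Finset F) (i : Fin m) :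
    ∃ γ : ℕ → F, ∀ t ∈ A i, t ^ (A i).card = ∑ k ∈ Finset.range (A i).card, γ k * t ^ k := by
  classical
  set p : Polynomial F := ∏ c ∈ A i, (Polynomial.X - Polynomial.C c) with hp
  have hmonic : p.Monic := Polynomial.monic_prod_of_monic _ _ fun c _ => Polynomial.monic_X_sub_C c
  have hdeg : p.natDegree = (A i).card := by
    rw [hp, Polynomial.natDegree_prod _ _ (fun c _ => Polynomial.X_sub_C_ne_zero c)]
    simp [Polynomial.natDegree_X_sub_C]
  refine ⟨fun k => -p.coeff k, fun t ht => ?_⟩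
  have heval : p.eval t = 0 := by
    rw [hp, Polynomial.eval_prod]
    exact Finset.prod_eq_zero ht (by simp)
  have := Polynomial.eval_eq_sum_range (p := p) t
  rw [heval, hdeg, Finset.sum_range_succ] at this
  have hlc : p.coeff (A i).card = 1 := by
    have := hmonic.coeff_natDegree
    rwa [hdeg] at this
  rw [hlc, one_mul] at this
  have h2 : t ^ (A i).card = -∑ k ∈ Finset.range (A i).card, p.coeff k * t ^ k := by
    linear_combination -this
  rw [h2, ← Finset.sum_neg_distrib]
  exact Finset.sum_congr rfl fun k _ => by ring

lemma mono_mem_box_span (A : Fin m → Finset F) (hA : ∀ i, 1 ≤ (A i).card) (e : Fin m → ℕ) :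
    mono A e ∈ Submodule.span F (mono A '' {b | b ∈ BX A ∧ b ≤ e}) := by
  classical
  generalize hn : (∑ i, e i) = n
  induction n using Nat.strong_induction_on generalizing e with
  | _ n ih =>
  by_cases hbox : ∀ i, e i < (A i).card
  · exact Submodule.subset_span ⟨e, ⟨mem_BX_iff.mpr hbox, le_refl e⟩, rfl⟩
  · push_neg at hbox
    obtain ⟨i, hi⟩ := hbox
    obtain ⟨γ, hγ⟩ := univariate A i
    set ni := (A i).card with hni
    -- decomposition of mono A e
    have key : mono A e = ∑ k ∈ Finset.range ni,
        γ k • mono A (Function.update e i (e i - ni + k)) := by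
      funext P
      have hPi : (P.1 i) ^ (e i) =
          ∑ k ∈ Finset.range ni, γ k * (P.1 i) ^ (e i - ni + k) := by
        have h1 : e i = (e i - ni) + ni := (Nat.sub_add_cancel hi).symm
        calc (P.1 i) ^ (e i) = (P.1 i) ^ (e i - ni) * (P.1 i) ^ ni := by
              rw [← pow_add]; rw [← h1]
          _ = (P.1 i) ^ (e i - ni) * ∑ k ∈ Finset.range ni, γ k * (P.1 i) ^ k := by
              rw [hγ _ (P.2 i)]
          _ = ∑ k ∈ Finset.range ni, γ k * (P.1 i) ^ (e i - ni + k) := by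
              rw [Finset.mul_sum]
              exact Finset.sum_congr rfl fun k _ => by rw [pow_add]; ring
      have hrest : ∀ k, mono A (Function.update e i (e i - ni + k)) P =
          (P.1 i) ^ (e i - ni + k) * ∏ j ∈ Finset.univ.erase i, (P.1 j) ^ (e j) := by
        intro k
        rw [mono, ← Finset.mul_prod_erase _ _ (Finset.mem_univ i)]
        simp only [Function.update_self]
        congr 1
        exact Finset.prod_congr rfl fun j hj =>
          by rw [Function.update_of_ne (Finset.ne_of_mem_erase hj)]
      have hm : mono A e P = (P.1 i) ^ (e i) * ∏ j ∈ Finset.univ.erase i, (P.1 j) ^ (e j) := by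
        rw [mono, ← Finset.mul_prod_erase _ _ (Finset.mem_univ i)]
      rw [hm, hPi, Finset.sum_mul]
      simp only [Finset.sum_apply, Pi.smul_apply, smul_eq_mul]
      exact Finset.sum_congr rfl fun k _ => by rw [hrest k]; ring
    rw [key]
    refine Submodule.sum_mem _ fun k hk => Submodule.smul_mem _ _ ?_
    set e' := Function.update e i (e i - ni + k) with he'
    have he'le : e' ≤ e := by
      rw [he', update_le_iff]
      refine ⟨?_, fun j _ => le_refl _⟩
      have h1 : k < ni := Finset.mem_range.mp hk
      have h2 : ni ≤ e i := hi
      omega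
    have hsum : ∑ j, e' j < n := by
      rw [← hn]
      refine Finset.sum_lt_sum (fun j _ => he'le j) ⟨i, Finset.mem_univ i, ?_⟩
      rw [he', Function.update_self]
      have h1 : k < ni := Finset.mem_range.mp hk
      have h2 : ni ≤ e i := hi
      omega
    have := ih _ hsum e' rfl
    refine Submodule.span_mono ?_ this
    exact Set.image_mono fun b hb => ⟨hb.1, le_trans hb.2 he'le⟩

lemma single_mem_span (A : Fin m → Finset F) [Fintype F] [DecidableEq F] (P0 : XT A) :
    (fun P : XT A => if P = P0 then (1 : F) else 0) ∈
      Submodule.span F (mono A '' ↑(BX A)) := by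
  classical
  set q : Fin m → Polynomial F :=
    fun i => ∏ c ∈ (A i).erase (P0.1 i), (Polynomial.X - Polynomial.C c) with hq
  set G : XT A → F := fun P => ∏ i, (q i).eval (P.1 i) with hG
  have hdeg : ∀ i, (q i).natDegree < (A i).card := by
    intro i
    rw [hq]
    simp only
    rw [Polynomial.natDegree_prod _ _ (fun c _ => Polynomial.X_sub_C_ne_zero c)]
    simp only [Polynomial.natDegree_X_sub_C, Finset.sum_const, smul_eq_mul, mul_one]
    rw [Finset.card_erase_of_mem (P0.2 i)]
    have : 1 ≤ (A i).card := Finset.card_pos.mpr ⟨P0.1 i, P0.2 i⟩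
    omega
  have hGspan : G ∈ Submodule.span F (mono A '' ↑(BX A)) := by
    have hGeq : G = ∑ b ∈ BX A, (∏ i, (q i).coeff (b i)) • mono A b := by
      funext P
      rw [hG]
      simp only
      have hev : ∀ i : Fin m, (q i).eval (P.1 i) =
          ∑ k ∈ Finset.range (A i).card, (q i).coeff k * (P.1 i) ^ k :=
        fun i => Polynomial.eval_eq_sum_range' (hdeg i) _
      rw [Finset.prod_congr rfl fun i _ => hev i, Finset.prod_univ_sum]
      rw [show Fintype.piFinset (fun i => Finset.range (A i).card) = BX A from rfl]
      simp only [Finset.sum_apply, Pi.smul_apply, smul_eq_mul]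
      exact Finset.sum_congr rfl fun b _ => by rw [mono, Finset.prod_mul_distrib]
    rw [hGeq]
    exact Submodule.sum_mem _ fun b hb => Submodule.smul_mem _ _
      (Submodule.subset_span ⟨b, hb, rfl⟩)
  have hG0 : G P0 ≠ 0 := by
    rw [hG]
    simp only
    rw [Finset.prod_ne_zero_iff]
    intro i _
    rw [hq]
    simp only
    rw [Polynomial.eval_prod, Finset.prod_ne_zero_iff]
    intro c hc
    simp only [Polynomial.eval_sub, Polynomial.eval_X, Polynomial.eval_C, sub_ne_zero]
    exact fun h => (Finset.mem_erase.mp hc).1 h.symm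
  have hGv : ∀ P : XT A, P ≠ P0 → G P = 0 := by
    intro P hP
    have hex : ∃ i, P.1 i ≠ P0.1 i := by
      by_contra hc
      push_neg at hc
      exact hP (Subtype.ext (funext hc))
    obtain ⟨i, hi⟩ := hex
    rw [hG]
    simp only
    refine Finset.prod_eq_zero (Finset.mem_univ i) ?_
    rw [hq]
    simp only
    rw [Polynomial.eval_prod]
    refine Finset.prod_eq_zero (Finset.mem_erase.mpr ⟨hi, P.2 i⟩) ?_
    simp
  have hind : (fun P : XT A => if P = P0 then (1 : F) else 0) = (G P0)⁻¹ • G := by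
    funext P
    by_cases h : P = P0
    · subst h; simp [inv_mul_cancel₀ hG0]
    · simp [h, hGv P h]
  rw [hind]
  exact Submodule.smul_mem _ _ hGspan

lemma top_le_span_box (A : Fin m → Finset F) [Fintype F] [DecidableEq F] :
    ⊤ ≤ Submodule.span F (mono A '' ↑(BX A)) := by
  intro v _
  have hv : v = ∑ P0 : XT A, v P0 • (fun P : XT A => if P = P0 then (1 : F) else 0) := by
    funext P
    simp only [Finset.sum_apply, Pi.smul_apply, smul_eq_mul, mul_ite, mul_one, mul_zero]
    rw [Finset.sum_ite_eq Finset.univ P v]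
    simp
  rw [hv]
  exact Submodule.sum_mem _ fun P0 _ => Submodule.smul_mem _ _ (single_mem_span A P0)

lemma card_XT (A : Fin m → Finset F) [Fintype F] [DecidableEq F] :
    Fintype.card (XT A) = ∏ i, (A i).card := by
  have e : XT A ≃ (∀ i, ↑(A i)) :=
    { toFun := fun P i => ⟨P.1 i, P.2 i⟩
      invFun := fun Q => ⟨fun i => (Q i).1, fun i => (Q i).2⟩
      left_inv := fun P => rfl
      right_inv := fun Q => rfl }
  rw [Fintype.card_congr e, Fintype.card_pi]
  exact Finset.prod_congr rfl fun i _ => Fintype.card_coe _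

lemma card_BX (A : Fin m → Finset F) : (BX A).card = ∏ i, (A i).card := by
  rw [BX, Fintype.card_piFinset]
  simp

noncomputable def bas (A : Fin m → Finset F) [Fintype F] [DecidableEq F] :
    Module.Basis ↑(BX A) F (XT A → F) :=
  basisOfTopLeSpanOfCardEqFinrank (fun b : ↑(BX A) => mono A b.1)
    (by
      have h : Set.range (fun b : ↑(BX A) => mono A b.1) = mono A '' ↑(BX A) := by
        ext f
        constructor
        · rintro ⟨b, rfl⟩; exact ⟨b.1, b.2, rfl⟩
        · rintro ⟨b, hb, rfl⟩; exact ⟨⟨b, hb⟩, rfl⟩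
      rw [h]
      exact top_le_span_box A)
    (by
      rw [Module.finrank_fintype_fun_eq_card, card_XT A, Fintype.card_coe, card_BX])

lemma bas_apply (A : Fin m → Finset F) [Fintype F] [DecidableEq F] (b : ↑(BX A)) :
    bas A b = mono A b.1 := by
  rw [bas, coe_basisOfTopLeSpanOfCardEqFinrank]


section Lead
variable (A : Fin m → Finset F) [Fintype F] [DecidableEq F]

lemma w_inj : Function.Injective (fun b : ↑(BX A) => w A b.1) := by
  intro a b h
  have ha := mem_BX_iff.mp a.2
  have hb := mem_BX_iff.mp b.2
  exact Subtype.ext (w_inj_aux m (K A) a.1 b.1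
    (fun i => lt_trans (ha i) (card_lt_K A i)) (fun i => lt_trans (hb i) (card_lt_K A i)) h)

def isLead (c : ↑(BX A) →₀ F) (p : ↑(BX A)) : Prop :=
  p ∈ c.support ∧ ∀ q ∈ c.support, q ≠ p → w A q.1 < w A p.1

lemma exists_isLead (c : ↑(BX A) →₀ F) (h : c.support.Nonempty) : ∃ p, isLead A c p := by
  obtain ⟨p, hp, hmax⟩ := Finset.exists_max_image c.support (fun b => w A b.1) h
  exact ⟨p, hp, fun q hq hne => lt_of_le_of_ne (hmax q hq) (fun he => hne (w_inj A he))⟩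

lemma mono_mem_sup (hA : ∀ i, 1 ≤ (A i).card)
    (N : Finset ↑(BX A)) (v : ↑(BX A) → (XT A → F))
    (hlead : ∀ p ∈ N, isLead A ((bas A).repr (v p)) p) :
    ∀ b : ↑(BX A), mono A b.1 ∈
      Submodule.span F (mono A '' ↑(deltaX A ↑(N.image Subtype.val))) ⊔
      Submodule.span F {g : XT A → F | ∃ p ∈ N, ∃ f : XT A → F, g = f * v p} := by
  intro b
  generalize hwb : w A b.1 = n
  induction n using Nat.strong_induction_on generalizing b with
  | _ n ih =>
  classical
  by_cases hδ : b.1 ∈ deltaX A ↑(N.image Subtype.val)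
  · exact Submodule.mem_sup_left (Submodule.subset_span ⟨b.1, hδ, rfl⟩)
  · have hbB : b.1 ∈ BX A := b.2
    have hex : ∃ a ∈ (↑(N.image Subtype.val) : Set (Fin m → ℕ)), ∀ i, a i ≤ b.1 i := by
      by_contra hc
      refine hδ ?_
      simp only [deltaX, Finset.mem_filter]
      exact ⟨hbB, hc⟩
    obtain ⟨a, haN, hab⟩ := hex
    have haN' : a ∈ N.image Subtype.val := haN
    obtain ⟨p, hpN, hpa⟩ := Finset.mem_image.mp haN'
    subst hpa
    set c0 := (bas A).repr (v p) with hc0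
    obtain ⟨hpsupp, hplt⟩ := hlead p hpN
    have hlam : c0 p ≠ 0 := Finsupp.mem_support_iff.mp hpsupp
    have hident : mono A (b.1 - p.1) * v p
        = ∑ c : ↑(BX A), c0 c • mono A ((b.1 - p.1) + c.1) := by
      conv_lhs => rw [← Module.Basis.sum_repr (bas A) (v p)]
      rw [Finset.mul_sum]
      refine Finset.sum_congr rfl fun c _ => ?_
      rw [bas_apply, mul_smul_comm, mono_mul]
    have hsub : (b.1 - p.1) + p.1 = b.1 := by
      funext i
      have := hab i
      simp only [Pi.add_apply, Pi.sub_apply]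
      omega
    have hiso : c0 p • mono A b.1 =
        mono A (b.1 - p.1) * v p
          - ∑ c ∈ Finset.univ.erase p, c0 c • mono A ((b.1 - p.1) + c.1) := by
      rw [hident, ← Finset.add_sum_erase _ _ (Finset.mem_univ p), hsub]
      abel
    have hmono : mono A b.1 = (c0 p)⁻¹ • (c0 p • mono A b.1) := by
      rw [inv_smul_smul₀ hlam]
    rw [hmono, hiso]
    refine Submodule.smul_mem _ _ (Submodule.sub_mem _ ?_ ?_)
    · exact Submodule.mem_sup_right (Submodule.subset_span ⟨p, hpN, mono A (b.1 - p.1), rfl⟩)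
    · refine Submodule.sum_mem _ fun c hc => ?_
      by_cases hc0 : c0 c = 0
      · rw [hc0, zero_smul]; exact Submodule.zero_mem _
      · refine Submodule.smul_mem _ _ ?_
        have hcsupp : c ∈ c0.support := Finsupp.mem_support_iff.mpr hc0
        have hcne : c ≠ p := Finset.ne_of_mem_erase hc
        have hwc : w A c.1 < w A p.1 := hplt c hcsupp hcne
        have hwe : w A ((b.1 - p.1) + c.1) < n := by
          have h1 : w A ((b.1 - p.1) + c.1) = w A (b.1 - p.1) + w A c.1 := w_add A _ _
          have h2 : w A (b.1 - p.1) + w A p.1 = w A b.1 := by rw [← w_add, hsub]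
          omega
        have hL4 := mono_mem_box_span A hA ((b.1 - p.1) + c.1)
        refine Submodule.span_le.mpr ?_ hL4
        rintro _ ⟨b', ⟨hb'B, hb'le⟩, rfl⟩
        have hwb' : w A b' < n := lt_of_le_of_lt (w_mono A hb'le) hwe
        exact ih (w A b') hwb' ⟨b', hb'B⟩ rfl

lemma top_le_sup (hA : ∀ i, 1 ≤ (A i).card)
    (N : Finset ↑(BX A)) (v : ↑(BX A) → (XT A → F))
    (hlead : ∀ p ∈ N, isLead A ((bas A).repr (v p)) p) :
    (⊤ : Submodule F (XT A → F)) ≤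
      Submodule.span F (mono A '' ↑(deltaX A ↑(N.image Subtype.val))) ⊔
      Submodule.span F {g : XT A → F | ∃ p ∈ N, ∃ f : XT A → F, g = f * v p} := by
  refine le_trans (top_le_span_box A) (Submodule.span_le.mpr ?_)
  rintro _ ⟨b, hb, rfl⟩
  exact mono_mem_sup A hA N v hlead ⟨b, hb⟩

lemma card_zeros_le (hA : ∀ i, 1 ≤ (A i).card)
    (N : Finset ↑(BX A)) (v : ↑(BX A) → (XT A → F))
    (hlead : ∀ p ∈ N, isLead A ((bas A).repr (v p)) p) :
    (Finset.univ.filter (fun P : XT A => ∀ p ∈ N, v p P = 0)).card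
      ≤ (deltaX A ↑(N.image Subtype.val)).card := by
  classical
  set Z := Finset.univ.filter (fun P : XT A => ∀ p ∈ N, v p P = 0) with hZ
  let W := Submodule.span F (mono A '' ↑(deltaX A ↑(N.image Subtype.val)))
  let J := Submodule.span F {g : XT A → F | ∃ p ∈ N, ∃ f : XT A → F, g = f * v p}
  let ρ : (XT A → F) →ₗ[F] (↑Z → F) := LinearMap.funLeft F F Subtype.val
  have hW : W = Submodule.span F (mono A '' ↑(deltaX A ↑(N.image Subtype.val))) := rfl
  have hsurj : Function.Surjective ρ :=
    LinearMap.funLeft_surjective_of_injective F F _ Subtype.val_injective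
  have hsupeq : W ⊔ J = ⊤ := le_antisymm le_top (top_le_sup A hA N v hlead)
  have hJbot : Submodule.map ρ J = ⊥ := by
    refine le_bot_iff.mp ?_
    rw [show J = Submodule.span F {g : XT A → F | ∃ p ∈ N, ∃ f : XT A → F, g = f * v p} from rfl,
      Submodule.map_le_iff_le_comap]
    refine Submodule.span_le.mpr ?_
    rintro g ⟨p, hp, f, rfl⟩
    simp only [SetLike.mem_coe, Submodule.mem_comap, Submodule.mem_bot]
    funext z
    have hz : ∀ q ∈ N, v q z.1 = 0 := (Finset.mem_filter.mp z.2).2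
    simp [ρ, LinearMap.funLeft_apply, Pi.mul_apply, hz p hp]
  have hmapW : Submodule.map ρ W = ⊤ := by
    have h := congrArg (Submodule.map ρ) hsupeq
    rw [Submodule.map_sup, hJbot, sup_bot_eq, Submodule.map_top,
      LinearMap.range_eq_top.mpr hsurj] at h
    exact h
  have h1 : Z.card = Module.finrank F (↑Z → F) := by
    rw [Module.finrank_fintype_fun_eq_card, Fintype.card_coe]
  have h2 : Module.finrank F (↑Z → F) = Module.finrank F (Submodule.map ρ W) := by
    rw [hmapW, finrank_top]
  have h3 : Module.finrank F (Submodule.map ρ W) ≤ Module.finrank F W :=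
    Submodule.finrank_map_le ρ W
  have h4 : Module.finrank F W ≤ (deltaX A ↑(N.image Subtype.val)).card := by
    have himg : W = Submodule.span F
        ↑((deltaX A ↑(N.image Subtype.val)).image (mono A)) := by
      rw [hW]
      congr 1
      exact Finset.coe_image.symm
    calc Module.finrank F W
        ≤ ((deltaX A ↑(N.image Subtype.val)).image (mono A)).card := by
          rw [himg]; exact finrank_span_finset_le_card _
      _ ≤ (deltaX A ↑(N.image Subtype.val)).card := Finset.card_image_le
  omega

end Lead

section PartA
variable (A : Fin m → Finset F) [Fintype F] [DecidableEq F]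

lemma Sd_mem_BX {d : ℕ} (hcard : ∀ i, 2 ≤ (A i).card) {a : Fin m → ℕ} (ha : a ∈ Sd m d) :
    a ∈ BX A :=
  mem_BX_iff.mpr fun i => lt_of_lt_of_le (Nat.lt_of_le_of_lt (ha.1 i) Nat.one_lt_two) (hcard i)

lemma evalCodeX_eq (S : Set (Fin m → ℕ)) :
    evalCodeX A S = Submodule.span F (mono A '' S) := rfl

lemma repr_support_subset {d : ℕ} (hcard : ∀ i, 2 ≤ (A i).card) {v : XT A → F}
    (hv : v ∈ evalCodeX A (Sd m d)) :
    ∀ c ∈ ((bas A).repr v).support, (c : Fin m → ℕ) ∈ Sd m d := by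
  rw [evalCodeX_eq] at hv
  induction hv using Submodule.span_induction with
  | mem x hx =>
    obtain ⟨a, ha, rfl⟩ := hx
    intro c hc
    have hb : mono A a = bas A ⟨a, Sd_mem_BX A hcard ha⟩ :=
      (bas_apply A ⟨a, Sd_mem_BX A hcard ha⟩).symm
    rw [hb, Module.Basis.repr_self] at hc
    have := Finsupp.support_single_subset hc
    rw [Finset.mem_singleton] at this
    rw [this]
    exact ha
  | zero => simp
  | add x y hx hy ihx ihy =>
    intro c hc
    rw [map_add] at hc
    rcases Finset.mem_union.mp (Finsupp.support_add hc) with h | h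
    · exact ihx c h
    · exact ihy c h
  | smul t x hx ihx =>
    intro c hc
    rw [map_smul] at hc
    exact ihx c (Finsupp.support_smul hc)

set_option maxHeartbeats 1000000 in
lemma lower_bound {d r : ℕ} (hcard : ∀ i, 2 ≤ (A i).card)
    (C' : Submodule F (XT A → F)) (hC' : C' ≤ evalCodeX A (Sd m d))
    (hrk : Module.finrank F C' = r) :
    ∃ N : Finset (Fin m → ℕ), ↑N ⊆ Sd m d ∧ N.card = r ∧
      (nablaX A ↑N).card ≤ (codeSupp C').card := by
  classical
  have hA : ∀ i, 1 ≤ (A i).card := fun i => le_trans one_le_two (hcard i)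
  let Piv : Finset ↑(BX A) := Finset.univ.filter
    (fun p => ∃ v, v ∈ C' ∧ v ≠ 0 ∧ isLead A ((bas A).repr v) p)
  let vp : ↑(BX A) → (XT A → F) := fun p =>
    if h : ∃ v, v ∈ C' ∧ v ≠ 0 ∧ isLead A ((bas A).repr v) p then h.choose else 0
  have hvp : ∀ p ∈ Piv, vp p ∈ C' ∧ vp p ≠ 0 ∧ isLead A ((bas A).repr (vp p)) p := by
    intro p hp
    have h := (Finset.mem_filter.mp hp).2
    simp only [vp, dif_pos h]
    exact h.choose_spec
  -- linear independence of the pivot vectors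
  have hindep : LinearIndependent F (fun p : ↑Piv => vp p.1) := by
    rw [Fintype.linearIndependent_iff]
    intro g hg
    by_contra hc
    push_neg at hc
    obtain ⟨i0, hi0⟩ := hc
    have hne : (Finset.univ.filter (fun i : ↑Piv => g i ≠ 0)).Nonempty :=
      ⟨i0, Finset.mem_filter.mpr ⟨Finset.mem_univ _, hi0⟩⟩
    obtain ⟨pm, hpm, hmax⟩ := Finset.exists_max_image _ (fun i : ↑Piv => w A i.1.1) hne
    have hgpm : g pm ≠ 0 := (Finset.mem_filter.mp hpm).2
    have hcoord := congrArg (fun u => (bas A).repr u pm.1) hg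
    simp only [map_sum, map_smul, Finsupp.coe_smul, Finset.sum_apply, Pi.smul_apply,
      smul_eq_mul, map_zero, Finsupp.coe_zero, Pi.zero_apply,
      Finsupp.coe_finset_sum] at hcoord
    rw [Finset.sum_eq_single pm] at hcoord
    · have hpl : isLead A ((bas A).repr (vp pm.1)) pm.1 := (hvp pm.1 pm.2).2.2
      have : ((bas A).repr (vp pm.1)) pm.1 ≠ 0 := Finsupp.mem_support_iff.mp hpl.1
      exact this (by
        have := mul_eq_zero.mp hcoord
        tauto)
    · intro i _ hine
      by_cases hgi : g i = 0
      · rw [hgi, zero_mul]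
      · have hiP : isLead A ((bas A).repr (vp i.1)) i.1 := (hvp i.1 i.2).2.2
        by_contra hnz
        have hnz2 : ((bas A).repr (vp i.1)) pm.1 ≠ 0 := by
          intro h0
          rw [h0, mul_zero] at hnz
          exact hnz rfl
        have hmem : pm.1 ∈ ((bas A).repr (vp i.1)).support := Finsupp.mem_support_iff.mpr hnz2
        have hne2 : pm.1 ≠ i.1 := fun h => hine (Subtype.ext h.symm)
        have hlt : w A pm.1.1 < w A i.1.1 := hiP.2 pm.1 hmem hne2
        have hle : w A i.1.1 ≤ w A pm.1.1 :=
          hmax i (Finset.mem_filter.mpr ⟨Finset.mem_univ _, hgi⟩)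
        omega
    · intro h
      exact absurd (Finset.mem_univ pm) h
  -- card Piv ≤ r
  have hle : Piv.card ≤ r := by
    have h1 : Submodule.span F (Set.range (fun p : ↑Piv => vp p.1)) ≤ C' := by
      rw [Submodule.span_le]
      rintro _ ⟨p, rfl⟩
      exact (hvp p.1 p.2).1
    have h2 := finrank_span_eq_card hindep
    calc Piv.card = Fintype.card ↑Piv := (Fintype.card_coe _).symm
      _ = Module.finrank F (Submodule.span F (Set.range (fun p : ↑Piv => vp p.1))) := h2.symm
      _ ≤ Module.finrank F C' := Submodule.finrank_mono h1
      _ = r := hrk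
  -- spanning: C' ≤ span of pivot vectors
  have hclaim : ∀ n : ℕ, ∀ v ∈ C', (∀ c ∈ ((bas A).repr v).support, w A c.1 < n) →
      v ∈ Submodule.span F (vp '' ↑Piv) := by
    intro n
    induction n using Nat.strong_induction_on with
    | _ n ih =>
    intro v hv hbound
    by_cases hv0 : v = 0
    · rw [hv0]; exact Submodule.zero_mem _
    · have hsne : ((bas A).repr v).support.Nonempty := by
        rw [Finsupp.support_nonempty_iff]
        intro h0
        exact hv0 ((bas A).repr.map_eq_zero_iff.mp h0)
      obtain ⟨p, hplead⟩ := exists_isLead A _ hsne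
      have hpPiv : p ∈ Piv := Finset.mem_filter.mpr ⟨Finset.mem_univ _, ⟨v, hv, hv0, hplead⟩⟩
      obtain ⟨hvpC, hvpne, hvplead⟩ := hvp p hpPiv
      set μ := ((bas A).repr v) p / ((bas A).repr (vp p)) p with hμ
      have hlamne : ((bas A).repr (vp p)) p ≠ 0 := Finsupp.mem_support_iff.mp hvplead.1
      have huC : v - μ • vp p ∈ C' := Submodule.sub_mem _ hv (Submodule.smul_mem _ _ hvpC)
      have hub : ∀ c ∈ ((bas A).repr (v - μ • vp p)).support, w A c.1 < w A p.1 := by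
        intro c hcs
        have hcval : ((bas A).repr v) c - μ * ((bas A).repr (vp p)) c ≠ 0 := by
          have := Finsupp.mem_support_iff.mp hcs
          rwa [map_sub, map_smul, Finsupp.sub_apply, Finsupp.smul_apply, smul_eq_mul] at this
        have hcnep : c ≠ p := by
          intro h
          subst h
          rw [hμ, div_mul_cancel₀ _ hlamne, sub_self] at hcval
          exact hcval rfl
        by_cases h1 : ((bas A).repr v) c = 0
        · have h2 : ((bas A).repr (vp p)) c ≠ 0 := by
            intro h2
            rw [h1, h2, mul_zero, sub_zero] at hcval
            exact hcval rfl
          exact hvplead.2 c (Finsupp.mem_support_iff.mpr h2) hcnep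
        · exact hplead.2 c (Finsupp.mem_support_iff.mpr h1) hcnep
      have hwpn : w A p.1 < n := hbound p hplead.1
      have hu := ih (w A p.1) hwpn (v - μ • vp p) huC hub
      have : v = (v - μ • vp p) + μ • vp p := by ring
      rw [this]
      exact Submodule.add_mem _ hu
        (Submodule.smul_mem _ _ (Submodule.subset_span ⟨p, hpPiv, rfl⟩))
  have hspan : C' ≤ Submodule.span F (vp '' ↑Piv) := by
    intro v hv
    refine hclaim ((Finset.univ.sup (fun b : ↑(BX A) => w A b.1)) + 1) v hv ?_
    intro c _
    exact Nat.lt_succ_of_le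
      (Finset.le_sup (f := fun b : ↑(BX A) => w A b.1) (Finset.mem_univ c))
  have hge : r ≤ Piv.card := by
    have h1 : Module.finrank F C' ≤ Module.finrank F (Submodule.span F (vp '' ↑Piv)) :=
      Submodule.finrank_mono hspan
    have h2 : Module.finrank F (Submodule.span F (vp '' ↑Piv)) ≤ (Piv.image vp).card := by
      have himg : (vp '' ↑Piv) = ↑(Piv.image vp) := Finset.coe_image.symm
      rw [himg]
      exact finrank_span_finset_le_card _
    have h3 : (Piv.image vp).card ≤ Piv.card := Finset.card_image_le
    omega
  have hPivr : Piv.card = r := le_antisymm hle hge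
  -- the pivot exponent set
  refine ⟨Piv.image Subtype.val, ?_, ?_, ?_⟩
  · intro a ha
    obtain ⟨p, hp, rfl⟩ := Finset.mem_image.mp ha
    obtain ⟨v, hvC, hv0, hlead⟩ := (Finset.mem_filter.mp hp).2
    exact repr_support_subset A hcard (hC' hvC) p hlead.1
  · rw [Finset.card_image_of_injective _ Subtype.val_injective, hPivr]
  · -- counting
    have hZ := card_zeros_le A hA Piv vp (fun p hp => (hvp p hp).2.2)
    set Z := Finset.univ.filter (fun P : XT A => ∀ p ∈ Piv, vp p P = 0) with hZdef
    set ZC := Finset.univ.filter (fun P : XT A => ∀ c ∈ C', c P = 0) with hZCdef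
    have hZC_sub : ZC ⊆ Z := by
      intro P hP
      have h := (Finset.mem_filter.mp hP).2
      exact Finset.mem_filter.mpr ⟨Finset.mem_univ _, fun p hp => h (vp p) (hvp p hp).1⟩
    have hcompl : (codeSupp C').card + ZC.card = Fintype.card (XT A) := by
      have key := Finset.card_filter_add_card_filter_not
        (s := (Finset.univ : Finset (XT A))) (p := fun P => ∃ c ∈ C', c P ≠ 0)
      have e1 : Finset.univ.filter (fun P : XT A => ∃ c ∈ C', c P ≠ 0) = codeSupp C' := by
        unfold codeSupp
        ext P
        simp [Finset.mem_filter]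
      have e2 : Finset.univ.filter (fun P : XT A => ¬ ∃ c ∈ C', c P ≠ 0) = ZC := by
        rw [hZCdef]
        ext P
        simp only [Finset.mem_filter, Finset.mem_univ, true_and]
        push_neg
        rfl
      rw [e1, e2, Finset.card_univ] at key
      exact key
    have hdn : (nablaX A ↑(Piv.image Subtype.val)).card
        + (deltaX A ↑(Piv.image Subtype.val)).card = (BX A).card := by
      have key := Finset.card_filter_add_card_filter_not
        (s := BX A)
        (p := fun b => ∃ a ∈ (↑(Piv.image Subtype.val) : Set (Fin m → ℕ)), ∀ i, a i ≤ b i)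
      have e1 : (BX A).filter
          (fun b => ∃ a ∈ (↑(Piv.image Subtype.val) : Set (Fin m → ℕ)), ∀ i, a i ≤ b i)
          = nablaX A ↑(Piv.image Subtype.val) := by
        unfold nablaX
        ext b
        simp [Finset.mem_filter]
      have e2 : (BX A).filter
          (fun b => ¬ ∃ a ∈ (↑(Piv.image Subtype.val) : Set (Fin m → ℕ)), ∀ i, a i ≤ b i)
          = deltaX A ↑(Piv.image Subtype.val) := by
        unfold deltaX
        ext b
        simp [Finset.mem_filter]
      rw [e1, e2] at key
      exact key
    have hXB : Fintype.card (XT A) = (BX A).card := by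
      rw [card_XT, card_BX]
    have hZCle : ZC.card ≤ Z.card := Finset.card_le_card hZC_sub
    omega

end PartA

section PartB
variable (A : Fin m → Finset F) [Fintype F] [DecidableEq F]

lemma nabla_delta_card (NS : Set (Fin m → ℕ)) :
    (nablaX A NS).card + (deltaX A NS).card = (BX A).card := by
  classical
  have key := Finset.card_filter_add_card_filter_not (s := BX A)
    (p := fun b => ∃ a ∈ NS, ∀ i, a i ≤ b i)
  have e1 : (BX A).filter (fun b => ∃ a ∈ NS, ∀ i, a i ≤ b i) = nablaX A NS := by
    unfold nablaX; ext b; simp [Finset.mem_filter]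
  have e2 : (BX A).filter (fun b => ¬ ∃ a ∈ NS, ∀ i, a i ≤ b i) = deltaX A NS := by
    unfold deltaX; ext b; simp [Finset.mem_filter]
  rw [e1, e2] at key
  exact key

set_option maxHeartbeats 1000000 in
lemma upper_bound {d : ℕ} (hcard : ∀ i, 2 ≤ (A i).card) (h0 : ∀ i, (0 : F) ∈ A i)
    (N : Finset (Fin m → ℕ)) (hNS : ↑N ⊆ Sd m d) :
    ∃ C' : Submodule F (XT A → F), C' ≤ evalCodeX A (Sd m d) ∧
      Module.finrank F C' = N.card ∧ (codeSupp C').card = (nablaX A ↑N).card := by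
  classical
  refine ⟨Submodule.span F (mono A '' ↑N), ?_, ?_, ?_⟩
  · rw [evalCodeX_eq]
    exact Submodule.span_mono (Set.image_mono hNS)
  · have hNB : ∀ a ∈ N, a ∈ BX A := fun a ha => Sd_mem_BX A hcard (hNS ha)
    let g : ↑N → ↑(BX A) := fun a => ⟨a.1, hNB a.1 a.2⟩
    have hginj : Function.Injective g := fun x y h =>
      Subtype.ext (congrArg (Subtype.val : ↑(BX A) → (Fin m → ℕ)) h)
    have hli : LinearIndependent F (fun a : ↑N => mono A a.1) := by
      have h2 := (bas A).linearIndependent.comp g hginj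
      have he : (fun a : ↑N => mono A a.1) = (⇑(bas A) ∘ g) := by
        funext a
        rw [Function.comp_apply, bas_apply]
      rw [he]
      exact h2
    have hr : Set.range (fun a : ↑N => mono A a.1) = mono A '' ↑N := by
      ext f
      constructor
      · rintro ⟨a, rfl⟩; exact ⟨a.1, a.2, rfl⟩
      · rintro ⟨a, ha, rfl⟩; exact ⟨⟨a, ha⟩, rfl⟩
    rw [← hr, finrank_span_eq_card hli, Fintype.card_coe]
  · -- support cardinality
    have hsupp : codeSupp (Submodule.span F (mono A '' ↑N)) =
        Finset.univ.filter (fun P : XT A => ∃ a ∈ N, mono A a P ≠ 0) := by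
      unfold codeSupp
      ext P
      simp only [Finset.mem_filter, Finset.mem_univ, true_and]
      constructor
      · rintro ⟨c, hc, hcP⟩
        by_contra hall
        push_neg at hall
        have hker : Submodule.span F (mono A '' ↑N) ≤
            LinearMap.ker (LinearMap.proj (R := F) (φ := fun _ : XT A => F) P) := by
          rw [Submodule.span_le]
          rintro _ ⟨a, ha, rfl⟩
          simp only [SetLike.mem_coe, LinearMap.mem_ker, LinearMap.proj_apply]
          exact hall a ha
        have := hker hc
        rw [LinearMap.mem_ker, LinearMap.proj_apply] at this
        exact hcP this
      · rintro ⟨a, ha, haP⟩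
        exact ⟨mono A a, Submodule.subset_span ⟨a, ha, rfl⟩, haP⟩
    have hApos : ∀ i, 0 < (A i).card := fun i => lt_of_lt_of_le two_pos (hcard i)
    let ψ : ∀ i, ↑(A i) ≃ Fin (A i).card := fun i =>
      ((A i).equivFin).trans (Equiv.swap ((A i).equivFin ⟨0, h0 i⟩) ⟨0, hApos i⟩)
    have hψ0 : ∀ i, ψ i ⟨0, h0 i⟩ = ⟨0, hApos i⟩ := by
      intro i
      simp [ψ, Equiv.swap_apply_left]
    have hψzero : ∀ (i) (x : ↑(A i)), ψ i x = ⟨0, hApos i⟩ ↔ x.1 = 0 := by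
      intro i x
      constructor
      · intro h
        have := (ψ i).injective (h.trans (hψ0 i).symm)
        exact congrArg Subtype.val this
      · intro h
        have : x = ⟨0, h0 i⟩ := Subtype.ext h
        rw [this]
        exact hψ0 i
    rw [hsupp]
    refine Finset.card_bij'
      (i := fun P _ => fun i => ((ψ i ⟨P.1 i, P.2 i⟩ : Fin (A i).card) : ℕ))
      (j := fun b hb => ⟨fun i => ((ψ i).symm ⟨b i, by
        have hb2 := hb
        simp only [nablaX, Finset.mem_filter] at hb2
        exact mem_BX_iff.mp hb2.1 i⟩).1, fun i => ((ψ i).symm _).2⟩)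
      ?_ ?_ ?_ ?_
    · -- maps into nablaX
      intro P hP
      obtain ⟨a, haN, haP⟩ := (Finset.mem_filter.mp hP).2
      simp only [nablaX, Finset.mem_filter]
      refine ⟨mem_BX_iff.mpr fun i => (ψ i ⟨P.1 i, P.2 i⟩).isLt, ?_⟩
      refine ⟨a, by exact_mod_cast haN, fun i => ?_⟩
      have hpow : ∀ j, (P.1 j) ^ (a j) ≠ 0 := by
        intro j
        have := Finset.prod_ne_zero_iff.mp haP
        exact this j (Finset.mem_univ j)
      have ha1 : a i ≤ 1 := (hNS haN).1 i
      rcases Nat.le_one_iff_eq_zero_or_eq_one.mp ha1 with h | h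
      · rw [h]; exact Nat.zero_le _
      · rw [h]
        have hPne : P.1 i ≠ 0 := by
          intro hz
          apply hpow i
          rw [hz, h, pow_one]
        have : ψ i ⟨P.1 i, P.2 i⟩ ≠ ⟨0, hApos i⟩ := by
          intro hc
          exact hPne ((hψzero i _).mp hc)
        have hvne : ((ψ i ⟨P.1 i, P.2 i⟩ : Fin (A i).card) : ℕ) ≠ 0 := by
          intro hc
          exact this (Fin.ext hc)
        simpa using Nat.one_le_iff_ne_zero.mpr hvne
    · -- maps back into the support filter
      intro b hb
      have hb2 := hb
      simp only [nablaX, Finset.mem_filter] at hb2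
      obtain ⟨hbB, a, haN, hab⟩ := hb2
      refine Finset.mem_filter.mpr ⟨Finset.mem_univ _, a, by exact_mod_cast haN, ?_⟩
      rw [mono]
      rw [Finset.prod_ne_zero_iff]
      intro i _
      have ha1 : a i ≤ 1 := (hNS (by exact_mod_cast haN)).1 i
      rcases Nat.le_one_iff_eq_zero_or_eq_one.mp ha1 with h | h
      · rw [h, pow_zero]; exact one_ne_zero
      · rw [h, pow_one]
        have hbi : 1 ≤ b i := le_trans (le_of_eq h.symm) (hab i)
        intro hz
        have : (ψ i).symm ⟨b i, mem_BX_iff.mp hbB i⟩ = ⟨0, h0 i⟩ := Subtype.ext hz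
        have h2 : (⟨b i, mem_BX_iff.mp hbB i⟩ : Fin (A i).card) = ψ i ⟨0, h0 i⟩ := by
          rw [← this, Equiv.apply_symm_apply]
        rw [hψ0 i] at h2
        have : b i = 0 := congrArg Fin.val h2
        omega
    · -- left inverse
      intro P hP
      refine Subtype.ext (funext fun i => ?_)
      have : (⟨((ψ i ⟨P.1 i, P.2 i⟩ : Fin (A i).card) : ℕ), _⟩ : Fin (A i).card)
          = ψ i ⟨P.1 i, P.2 i⟩ := Fin.ext rfl
      simp only [this, Equiv.symm_apply_apply]
    · -- right inverse
      intro b hb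
      funext i
      simp only []
      rw [Subtype.eta, Equiv.apply_symm_apply]

lemma exists_N (d r : ℕ) (hr2 : r ≤ m.choose d) :
    ∃ N : Finset (Fin m → ℕ), ↑N ⊆ Sd m d ∧ N.card = r := by
  classical
  let T : Finset (Fin m → ℕ) := (Finset.powersetCard d (Finset.univ : Finset (Fin m))).image
      (fun s i => if i ∈ s then 1 else 0)
  have hinj : Set.InjOn (fun (s : Finset (Fin m)) => fun i => if i ∈ s then (1:ℕ) else 0)
      ↑(Finset.powersetCard d (Finset.univ : Finset (Fin m))) := by
    intro s _ t _ h
    ext i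
    have hfi := congrFun h i
    by_cases hi : i ∈ s <;> by_cases hj : i ∈ t <;> simp [hi, hj] at hfi ⊢
  have hTcard : T.card = m.choose d := by
    rw [Finset.card_image_of_injOn hinj, Finset.card_powersetCard, Finset.card_univ,
      Fintype.card_fin]
  have hTS : ↑T ⊆ Sd m d := by
    intro a ha
    have ha' : a ∈ T := ha
    obtain ⟨s, hs, rfl⟩ := Finset.mem_image.mp ha'
    have hcards : s.card = d := (Finset.mem_powersetCard.mp hs).2
    constructor
    · intro i
      by_cases hi : i ∈ s <;> simp [hi]
    · rw [Finset.sum_ite_mem, Finset.univ_inter, Finset.sum_const, smul_eq_mul, mul_one]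
      exact hcards
  have hrT : r ≤ T.card := le_trans hr2 (le_of_eq hTcard.symm)
  obtain ⟨N, hNT, hNr⟩ := Finset.exists_subset_card_eq hrT
  exact ⟨N, fun a ha => hTS (hNT ha), hNr⟩

end PartB

end SFC

/-- For a Cartesian set `X = A_1 × ⋯ × A_m` over `F_q` with `0 ∈ A_i` for
all `i`, `1 ≤ d ≤ m` and `1 ≤ r ≤ C(m,d)`, the `r`-th generalized Hamming weight of the
Cartesian square-free code `C_d^{X,S}` equals
`n_1⋯n_m − max{|Δ_X(N)| : N ⊆ S_d(m), |N| = r} = min{|∇_X(N)| : N ⊆ S_d(m), |N| = r}`. -/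
theorem ghw_cartesian_squarefree_homogeneous_eq_footprint
    {F : Type*} [Field F] [Fintype F] [DecidableEq F] {m d r : ℕ}
    (A : Fin m → Finset F)
    (hcard : ∀ i, 2 ≤ (A i).card)
    (hmono : ∀ i j : Fin m, i ≤ j → (A i).card ≤ (A j).card)
    (h0 : ∀ i, (0 : F) ∈ A i)
    (hd1 : 1 ≤ d) (hdm : d ≤ m) (hr1 : 1 ≤ r) (hr2 : r ≤ m.choose d) :
    GHW (evalCodeX A (Sd m d)) r =
      (∏ i, (A i).card) -
        sSup {k | ∃ N : Finset (Fin m → ℕ),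
          ↑N ⊆ Sd m d ∧ N.card = r ∧ (deltaX A ↑N).card = k} ∧
    GHW (evalCodeX A (Sd m d)) r =
      sInf {k | ∃ N : Finset (Fin m → ℕ),
        ↑N ⊆ Sd m d ∧ N.card = r ∧ (nablaX A ↑N).card = k} := by
  classical
  set Code := evalCodeX A (Sd m d) with hCode
  set NabSet := {k | ∃ N : Finset (Fin m → ℕ),
      ↑N ⊆ Sd m d ∧ N.card = r ∧ (nablaX A ↑N).card = k} with hNabSet
  set DelSet := {k | ∃ N : Finset (Fin m → ℕ),
      ↑N ⊆ Sd m d ∧ N.card = r ∧ (deltaX A ↑N).card = k} with hDelSet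
  obtain ⟨N0, hN0S, hN0r⟩ := SFC.exists_N (m := m) d r hr2
  have hNabNE : NabSet.Nonempty := ⟨(nablaX A ↑N0).card, N0, hN0S, hN0r, rfl⟩
  have hDelNE : DelSet.Nonempty := ⟨(deltaX A ↑N0).card, N0, hN0S, hN0r, rfl⟩
  have hDelNab : ∀ N : Finset (Fin m → ℕ),
      (nablaX A ↑N).card + (deltaX A ↑N).card = ∏ i, (A i).card := by
    intro N
    rw [SFC.nabla_delta_card, SFC.card_BX]
  have hDelBdd : BddAbove DelSet := by
    refine ⟨∏ i, (A i).card, ?_⟩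
    rintro k ⟨N, _, _, rfl⟩
    have := hDelNab N
    omega
  have hmain : GHW Code r = sInf NabSet := by
    have hsub : ∀ k ∈ NabSet, ∃ C' : Submodule F ({P : Fin m → F // ∀ i, P i ∈ A i} → F),
        C' ≤ Code ∧ Module.finrank F C' = r ∧ (codeSupp C').card = k := by
      rintro k ⟨N, hNS, hNr, rfl⟩
      obtain ⟨C', hle, hrk, hsupp⟩ := SFC.upper_bound A hcard h0 N hNS
      exact ⟨C', hle, by rw [hrk, hNr], hsupp⟩
    have hGNE : {k | ∃ C' : Submodule F ({P : Fin m → F // ∀ i, P i ∈ A i} → F),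
        C' ≤ Code ∧ Module.finrank F C' = r ∧ (codeSupp C').card = k}.Nonempty := by
      obtain ⟨C', h1, h2, h3⟩ := hsub _ (Nat.sInf_mem hNabNE)
      exact ⟨_, C', h1, h2, h3⟩
    apply le_antisymm
    · exact Nat.sInf_le (hsub _ (Nat.sInf_mem hNabNE))
    · obtain ⟨C', hle, hrk, hsupp⟩ := Nat.sInf_mem hGNE
      obtain ⟨N, hNS, hNr, hineq⟩ := SFC.lower_bound A hcard C' hle hrk
      calc sInf NabSet ≤ (nablaX A ↑N).card := Nat.sInf_le ⟨N, hNS, hNr, rfl⟩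
        _ ≤ sInf {k | ∃ C' : Submodule F ({P : Fin m → F // ∀ i, P i ∈ A i} → F),
            C' ≤ Code ∧ Module.finrank F C' = r ∧ (codeSupp C').card = k} := by
              rw [← hsupp]; exact hineq
        _ = GHW Code r := rfl
  obtain ⟨N1, hN1S, hN1r, hN1⟩ := Nat.sSup_mem hDelNE hDelBdd
  have hfirst : sInf NabSet = (∏ i, (A i).card) - sSup DelSet := by
    apply le_antisymm
    · have h1 : (nablaX A ↑N1).card = (∏ i, (A i).card) - sSup DelSet := by
        have := hDelNab N1
        omega
      rw [← h1]
      exact Nat.sInf_le ⟨N1, hN1S, hN1r, rfl⟩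
    · obtain ⟨N2, hN2S, hN2r, hN2⟩ := Nat.sInf_mem hNabNE
      have hd2 : (deltaX A ↑N2).card ≤ sSup DelSet := le_csSup hDelBdd ⟨N2, hN2S, hN2r, rfl⟩
      have := hDelNab N2
      omega
  exact ⟨by rw [hmain, hfirst], hmain⟩
end

section
/- Let 1 ≤ d ≤ m and 1 ≤ r ≤ m+1−d, and assume that n_{d+r−1}·n_{d−1}·(n_i + n_j − 1) ≤ n_i·n_j·(n_{d+r−1} + n_{d−1} − 1) for every pair of indices d ≤ i < j ≤ d+r−2 (a condition that is vacuous when r ≤ 2). Then for every set M ⊆ S_d(m) with |M| = r one has |∇_X(M)| ≥ ∏_{i=1}^{d−1}(n_i − 1) · ∏_{i=d+r}^{m} n_i · (∏_{i=d}^{d+r−1} n_i − 1). -/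
/-- `nval A k` is the cardinality `n_k = |A_k|`, with the paper's 1-based indexing
(junk value `1` outside the range `1 ≤ k ≤ m`). -/
def nval {F : Type*} {m : ℕ} (A : Fin m → Finset F) (k : ℕ) : ℕ :=
  if h : 1 ≤ k ∧ k ≤ m then (A ⟨k - 1, by omega⟩).card else 1


/-!
Identify `M` with the family `𝒢` of supports of its elements: `∇_X(M)` is then the set of points of
the box `B_X` whose support contains a member of `𝒢`. Replacing `j` by `i < j` in the members of `𝒢`
where possible (a UV-compression) does not enlarge this set, since `n_i ≤ n_j`: swapping the
coordinates `i` and `j` maps the points gained injectively to points lost. So we may assume `𝒢`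
shifted.

Let `L` be the first `k = d - 1` coordinates and `J` the largest coordinate used by a shifted `𝒢`.
Then `𝒢` contains every star `L ∪ {j}` with `k ≤ j ≤ J`, and their shadow contains all points
positive on `L` that do not vanish on `[k, J]`. If every member of `𝒢` contains `L`, then `𝒢`
consists of such stars, so `k + r ≤ J + 1`, and this already gives the bound. Otherwise a member `a`
misses some `z ∈ L`; the points positive on `a` and zero on the rest of `[0, J]` vanish at `z`, and
by monotonicity of the `n_t` they are at least as many as the points positive on `L` and zero on
`[k, J]`. So the shadow contains at least as many points as there are points positive on `L`.
-/

open Finset UV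
open scoped FinsetFamily

section BoxShadow

variable {ι : Type*} [Fintype ι] [DecidableEq ι] {n : ι → ℕ} {𝒢 : Finset (Finset ι)}

def boxShadow (n : ι → ℕ) (𝒢 : Finset (Finset ι)) : Finset (ι → ℕ) :=
  {b ∈ Fintype.piFinset fun t => range (n t) | ∃ s ∈ 𝒢, ∀ t ∈ s, b t ≠ 0}

lemma mem_boxShadow {b : ι → ℕ} :
    b ∈ boxShadow n 𝒢 ↔ (∀ t, b t < n t) ∧ ∃ s ∈ 𝒢, ∀ t ∈ s, b t ≠ 0 := by
  simp [boxShadow]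

lemma comp_swap_mem_boxShadow_sdiff {i j : ι} (hn : n i ≤ n j) {b : ι → ℕ}
    (hb : b ∈ boxShadow n (𝓒 {i} {j} 𝒢) \ boxShadow n 𝒢) :
    b ∘ Equiv.swap i j ∈ boxShadow n 𝒢 \ boxShadow n (𝓒 {i} {j} 𝒢) := by
  simp only [mem_sdiff, mem_boxShadow, not_and, not_exists] at hb ⊢
  obtain ⟨⟨hbox, s, hs, hsb⟩, hnot⟩ := hb
  have hs𝒢 : s ∉ 𝒢 := fun h => hnot hbox s h hsb
  have hi : i ∈ s := singleton_subset_iff.mp (le_of_mem_compression_of_notMem hs hs𝒢)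
  have hj : j ∉ s := disjoint_singleton_left.mp (disjoint_of_mem_compression_of_notMem hs hs𝒢)
  have hs' : (s ∪ {j}) \ {i} ∈ 𝒢 := sup_sdiff_mem_of_mem_compression_of_notMem hs hs𝒢
  have hbj : b j = 0 := by
    by_contra hbj
    refine hnot hbox _ hs' fun t ht => ?_
    simp only [mem_sdiff, mem_union, mem_singleton] at ht
    rcases ht with ⟨ht | rfl, -⟩
    exacts [hsb t ht, hbj]
  have hswap {t : ι} (hti : t ≠ i) (htj : t ≠ j) : (b ∘ Equiv.swap i j) t = b t := by
    simp [Equiv.swap_apply_of_ne_of_ne hti htj]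
  refine ⟨⟨fun t => ?_, _, hs', fun t ht => ?_⟩, fun _ c hc hcb => ?_⟩
  · rcases eq_or_ne t i with rfl | hti
    · simpa [hbj] using (hbox t).trans_le' (Nat.zero_le _)
    rcases eq_or_ne t j with rfl | htj
    · simpa using (hbox i).trans_le hn
    · rw [hswap hti htj]; exact hbox t
  · simp only [mem_sdiff, mem_union, mem_singleton] at ht
    rcases ht with ⟨ht | rfl, hti⟩
    · rw [hswap hti (ne_of_mem_of_not_mem ht hj)]; exact hsb t ht
    · simpa using hsb i hi
  · have hic : i ∉ c := fun hic => hcb i hic (by simpa using hbj)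
    by_cases hjc : j ∈ c
    · have hc' := sup_sdiff_mem_of_mem_compression hc (singleton_subset_iff.mpr hjc)
        (disjoint_singleton_left.mpr hic)
      refine hnot hbox _ hc' fun t ht => ?_
      simp only [sup_eq_union, mem_sdiff, mem_union, mem_singleton] at ht
      rcases ht with ⟨ht | rfl, htj⟩
      · rw [← hswap (ne_of_mem_of_not_mem ht hic) htj]; exact hcb t ht
      · exact hsb t hi
    · have hc𝒢 : c ∈ 𝒢 := by
        by_contra hc𝒢
        exact hic (singleton_subset_iff.mp (le_of_mem_compression_of_notMem hc hc𝒢))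
      refine hnot hbox c hc𝒢 fun t ht => ?_
      rw [← hswap (ne_of_mem_of_not_mem ht hic) (ne_of_mem_of_not_mem ht hjc)]
      exact hcb t ht

lemma card_boxShadow_compression_le {i j : ι} (hn : n i ≤ n j) :
    #(boxShadow n (𝓒 {i} {j} 𝒢)) ≤ #(boxShadow n 𝒢) := by
  rw [← card_sdiff_le_card_sdiff_iff]
  exact card_le_card_of_injOn _ (fun b hb => comp_swap_mem_boxShadow_sdiff hn hb)
    (Equiv.swap i j).surjective.injective_comp_right.injOn

end BoxShadow

section Shifting

variable {m : ℕ} {𝒢 : Finset (Finset (Fin m))}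

def IsShifted {α : Type*} [LinearOrder α] (𝒢 : Finset (Finset α)) : Prop :=
  ∀ ⦃i j : α⦄, i < j → ∀ ⦃s⦄, s ∈ 𝒢 → i ∉ s → j ∈ s → insert i (s.erase j) ∈ 𝒢

def indexSum (s : Finset (Fin m)) : ℕ := ∑ t ∈ s, (t : ℕ)

lemma compress_singleton (i j : Fin m) (s : Finset (Fin m)) :
    compress {i} {j} s = if i ∉ s ∧ j ∈ s then insert i (s.erase j) else s := by
  unfold compress
  by_cases h : i ∉ s ∧ j ∈ s
  · have hij : i ≠ j := fun hij => h.1 (hij ▸ h.2)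
    rw [if_pos (by simpa using h), if_pos h]
    ext t
    simp only [sup_eq_union, mem_sdiff, mem_union, mem_singleton, mem_insert, mem_erase]
    grind
  · rw [if_neg (by simpa using h), if_neg h]

lemma indexSum_insert_erase_add {i j : Fin m} {s : Finset (Fin m)} (hi : i ∉ s) (hj : j ∈ s) :
    indexSum (insert i (s.erase j)) + j = indexSum s + i := by
  unfold indexSum
  rw [sum_insert (fun h => hi (mem_of_mem_erase h)), ← sum_erase_add s _ hj]
  ring

lemma sum_indexSum_compression_lt {i j : Fin m} (hij : i < j) {s : Finset (Fin m)} (hs : s ∈ 𝒢)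
    (hi : i ∉ s) (hj : j ∈ s) (hnot : insert i (s.erase j) ∉ 𝒢) :
    ∑ a ∈ 𝓒 {i} {j} 𝒢, indexSum a < ∑ a ∈ 𝒢, indexSum a := by
  rw [compression, sum_union compress_disjoint, filter_image, sum_image compress_injOn,
    ← sum_filter_add_sum_filter_not 𝒢 (fun a => compress {i} {j} a ∈ 𝒢)]
  refine Nat.add_lt_add_left (sum_lt_sum (fun a _ => ?_) ⟨s, ?_⟩) _
  · rw [compress_singleton]
    split_ifs with h
    · have := indexSum_insert_erase_add h.1 h.2
      omega
    · exact le_rfl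
  · have := indexSum_insert_erase_add hi hj
    rw [compress_singleton, if_pos ⟨hi, hj⟩]
    exact ⟨mem_filter.mpr ⟨hs, by rwa [compress_singleton, if_pos ⟨hi, hj⟩]⟩, by omega⟩

lemma exists_isShifted_card_boxShadow_le {n : Fin m → ℕ} (hn : Monotone n) {k : ℕ}
    (h𝒢 : (𝒢 : Set (Finset (Fin m))).Sized k) :
    ∃ ℋ, IsShifted ℋ ∧ (ℋ : Set (Finset (Fin m))).Sized k ∧ #ℋ = #𝒢 ∧
      #(boxShadow n ℋ) ≤ #(boxShadow n 𝒢) := by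
  obtain ⟨ℋ, hℋ, hmin⟩ := exists_min_image
    {ℋ ∈ (powersetCard k univ).powerset | #ℋ = #𝒢 ∧ #(boxShadow n ℋ) ≤ #(boxShadow n 𝒢)}
    (fun ℋ => ∑ s ∈ ℋ, indexSum s)
    ⟨𝒢, by simpa [subset_powersetCard_univ_iff] using h𝒢⟩
  simp only [mem_filter, mem_powerset, subset_powersetCard_univ_iff] at hℋ hmin
  refine ⟨ℋ, fun i j hij s hs hi hj => ?_, hℋ⟩
  by_contra hnot
  refine (sum_indexSum_compression_lt hij hs hi hj hnot).not_ge (hmin _ ⟨?_, ?_, ?_⟩)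
  · exact hℋ.1.uvCompression (by simp)
  · rw [card_compression, hℋ.2.1]
  · exact (card_boxShadow_compression_le (hn hij.le)).trans hℋ.2.2

end Shifting

section Stars

variable {m k : ℕ} {𝒢 : Finset (Finset (Fin m))}

-- Coordinates are 0-based: `lowSet m (d - 1)` is the paper's `{1, …, d - 1}`.
def lowSet (m k : ℕ) : Finset (Fin m) := {t | (t : ℕ) < k}

@[simp]
lemma mem_lowSet {t : Fin m} : t ∈ lowSet m k ↔ (t : ℕ) < k := by simp [lowSet]

lemma card_lowSet (hk : k ≤ m) : #(lowSet m k) = k := by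
  rw [lowSet, Fin.card_filter_val_lt, min_eq_right hk]

lemma card_insert_lowSet {j : Fin m} (hj : k ≤ j) : #(insert j (lowSet m k)) = k + 1 := by
  rw [card_insert_of_notMem (by simpa using hj), card_lowSet (by omega)]

lemma IsShifted.insert_lowSet_mem (h𝒢 : IsShifted 𝒢)
    (hsz : (𝒢 : Set (Finset (Fin m))).Sized (k + 1)) {s : Finset (Fin m)} (hs : s ∈ 𝒢)
    {j : Fin m} (hj : j ∈ s) (hkj : k ≤ j) : insert j (lowSet m k) ∈ 𝒢 := by
  set σ := insert j (lowSet m k)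
  induction hc : #(σ \ s) generalizing s with
  | zero =>
    have hσs : σ ⊆ s := sdiff_eq_empty_iff_subset.mp (card_eq_zero.mp hc)
    rwa [eq_of_subset_of_card_le hσs (by rw [hsz hs, card_insert_lowSet hkj])]
  | succ c ih =>
    obtain ⟨z, hz⟩ : (σ \ s).Nonempty := by rw [← card_pos, hc]; omega
    obtain ⟨u, hu⟩ : (s \ σ).Nonempty := by
      rw [← card_pos, card_sdiff_comm (by rw [hsz hs, card_insert_lowSet hkj]), hc]; omega
    simp only [σ, mem_sdiff, mem_insert, mem_lowSet, not_or] at hz hu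
    have hzj : z ≠ j := fun h => hz.2 (h ▸ hj)
    have hzu : z < u := by rw [Fin.lt_def]; have := hz.1.resolve_left hzj; omega
    have hs' := h𝒢 hzu hs hz.2 hu.1
    refine ih hs' (mem_insert_of_mem (mem_erase.mpr ⟨Ne.symm hu.2.1, hj⟩)) ?_
    have : σ \ insert z (s.erase u) = (σ \ s).erase z := by
      ext t
      simp only [σ, mem_sdiff, mem_insert, mem_erase, mem_lowSet]
      grind
    rw [this, card_erase_of_mem (by simp [σ, hz.1, hz.2]), hc, Nat.add_sub_cancel]

lemma IsShifted.insert_lowSet_mem_of_le (h𝒢 : IsShifted 𝒢) {j j' : Fin m}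
    (hj : insert j (lowSet m k) ∈ 𝒢) (hkj' : k ≤ j') (hj'j : j' ≤ j) :
    insert j' (lowSet m k) ∈ 𝒢 := by
  rcases hj'j.eq_or_lt with rfl | hlt
  · exact hj
  have hjk : j ∉ lowSet m k := by rw [mem_lowSet]; omega
  have := h𝒢 hlt hj (by simp only [mem_insert, mem_lowSet, not_or]; omega) (mem_insert_self _ _)
  rwa [erase_insert hjk] at this

end Stars

section PatternBox

variable {ι : Type*} [Fintype ι] [DecidableEq ι] {n : ι → ℕ} {S T : Finset ι}

def patternBox (n : ι → ℕ) (S T : Finset ι) : Finset (ι → ℕ) :=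
  Fintype.piFinset fun t => if t ∈ S then Ico 1 (n t) else if t ∈ T then {0} else range (n t)

lemma mem_patternBox (hn : ∀ t, 0 < n t) {b : ι → ℕ} :
    b ∈ patternBox n S T ↔
      (∀ t, b t < n t) ∧ (∀ t ∈ S, b t ≠ 0) ∧ ∀ t ∈ T, t ∉ S → b t = 0 := by
  have key : ∀ t, (b t ∈ if t ∈ S then Ico 1 (n t) else if t ∈ T then {0} else range (n t)) ↔
      b t < n t ∧ (t ∈ S → b t ≠ 0) ∧ (t ∈ T → t ∉ S → b t = 0) := fun t => by
    have := hn t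
    split_ifs <;> simp_all [Nat.one_le_iff_ne_zero, and_comm]
  simp only [patternBox, Fintype.mem_piFinset, key, forall_and]

lemma card_patternBox (S T : Finset ι) :
    #(patternBox n S T) = (∏ t ∈ S, (n t - 1)) * ∏ t ∈ (S ∪ T)ᶜ, n t := by
  rw [patternBox, Fintype.card_piFinset, ← prod_mul_prod_compl S]
  congr 1
  · exact prod_congr rfl fun t ht => by simp [ht]
  · rw [compl_union, ← filter_mem_eq_inter, prod_filter]
    exact prod_congr rfl fun t ht => by
      rw [mem_compl] at ht
      by_cases htT : t ∈ T <;> simp [ht, htT]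

lemma patternBox_subset_boxShadow (hn : ∀ t, 0 < n t) {𝒢 : Finset (Finset ι)} (hS : S ∈ 𝒢) :
    patternBox n S T ⊆ boxShadow n 𝒢 := fun b hb => by
  rw [mem_patternBox hn] at hb
  exact mem_boxShadow.mpr ⟨hb.1, S, hS, hb.2.1⟩

lemma disjoint_patternBox {S' T' : Finset ι} (hn : ∀ t, 0 < n t) {z : ι} (hzS : z ∈ S)
    (hzT' : z ∈ T') (hzS' : z ∉ S') : Disjoint (patternBox n S T) (patternBox n S' T') :=
  disjoint_left.mpr fun _ hb hb' =>
    ((mem_patternBox hn).mp hb).2.1 z hzS (((mem_patternBox hn).mp hb').2.2 z hzT' hzS')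

end PatternBox

section Counting

variable {m k : ℕ} {𝒢 : Finset (Finset (Fin m))} {n : Fin m → ℕ}

lemma lowSet_succ (hk : k < m) : lowSet m (k + 1) = insert ⟨k, hk⟩ (lowSet m k) := by
  ext t
  simp only [mem_lowSet, mem_insert, Fin.ext_iff]
  omega

lemma prod_lowSet_le_prod {f : Fin m → ℕ} (hf : Monotone f) (hf1 : ∀ t, 1 ≤ f t)
    {s : Finset (Fin m)} (hs : k ≤ #s) : ∏ t ∈ lowSet m k, f t ≤ ∏ t ∈ s, f t := by
  induction s using Finset.induction_on_max generalizing k with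
  | empty =>
    obtain rfl : k = 0 := by simpa using hs
    simp [lowSet]
  | insert a s hlt ih =>
    rcases k with _ | k
    · simpa [lowSet] using one_le_prod' fun t _ => hf1 t
    have has : a ∉ s := fun h => (hlt a h).false
    have hsa : #s ≤ a := by
      simpa using card_le_card (fun x hx => mem_Iio.mpr (hlt x hx) : s ⊆ Iio a)
    rw [card_insert_of_notMem has] at hs
    rw [lowSet_succ (by omega), prod_insert (by simp), prod_insert has]
    exact Nat.mul_le_mul (hf (by rw [Fin.le_def]; simp only; omega)) (ih (by omega))

lemma IsShifted.exists_insert_lowSet_mem (h𝒢 : IsShifted 𝒢)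
    (hsz : (𝒢 : Set (Finset (Fin m))).Sized (k + 1)) (hne : 𝒢.Nonempty) :
    ∃ J : Fin m, k ≤ J ∧ (∀ s ∈ 𝒢, ∀ t ∈ s, t ≤ J) ∧
      ∀ j : Fin m, k ≤ j → j ≤ J → insert j (lowSet m k) ∈ 𝒢 := by
  obtain ⟨s₀, hs₀⟩ := hne
  obtain ⟨u, hu, hku⟩ : ∃ u ∈ s₀, u ∉ lowSet m k := exists_mem_notMem_of_card_lt_card (by
    rw [hsz hs₀, lowSet, Fin.card_filter_val_lt]; omega)
  have hU : (𝒢.sup id).Nonempty := ⟨u, mem_sup.mpr ⟨s₀, hs₀, hu⟩⟩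
  obtain ⟨s, hs, hJs⟩ := mem_sup.mp ((𝒢.sup id).max'_mem hU)
  have hle : ∀ s ∈ 𝒢, ∀ t ∈ s, t ≤ (𝒢.sup id).max' hU :=
    fun s hs t ht => le_max' _ _ (mem_sup.mpr ⟨s, hs, ht⟩)
  have hkJ : k ≤ (𝒢.sup id).max' hU := le_trans (by simpa using hku) (hle s₀ hs₀ u hu)
  exact ⟨_, hkJ, hle, fun j hkj hjJ =>
    h𝒢.insert_lowSet_mem_of_le (h𝒢.insert_lowSet_mem hsz hs hJs hkJ) hkj hjJ⟩

lemma card_add_le_of_lowSet_subset (hsz : (𝒢 : Set (Finset (Fin m))).Sized (k + 1)) {J : Fin m}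
    (hkJ : k ≤ J) (hJ : ∀ s ∈ 𝒢, ∀ t ∈ s, t ≤ J) (hL : ∀ s ∈ 𝒢, lowSet m k ⊆ s) :
    k + #𝒢 ≤ J + 1 := by
  have hsub : 𝒢 ⊆ image (fun j => insert j (lowSet m k)) {j : Fin m | k ≤ j ∧ j ≤ J} := by
    intro s hs
    have : #(s \ lowSet m k) = 1 := by
      rw [card_sdiff_of_subset (hL s hs), hsz hs, card_lowSet (by omega)]; omega
    obtain ⟨j, hj⟩ := card_eq_one.mp this
    have hjs : j ∈ s \ lowSet m k := hj ▸ mem_singleton_self j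
    rw [mem_sdiff, mem_lowSet, not_lt] at hjs
    refine mem_image.mpr ⟨j, mem_filter.mpr ⟨mem_univ _, hjs.2, hJ s hs j hjs.1⟩, ?_⟩
    rw [← union_sdiff_of_subset (hL s hs), hj, union_comm]
    rfl
  have hval : #{j : Fin m | k ≤ j ∧ j ≤ J} ≤ #(Icc k (J : ℕ)) :=
    card_le_card_of_injOn Fin.val (fun j hj => by
      rw [mem_coe, mem_filter] at hj
      exact mem_Icc.mpr hj.2) Fin.val_injective.injOn
  have := (card_le_card hsub).trans (card_image_le.trans hval)
  rw [Nat.card_Icc] at this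
  omega

lemma lowSet_subset_Iic {J : Fin m} (hkJ : k ≤ J + 1) : lowSet m k ⊆ Iic J := fun t ht => by
  rw [mem_lowSet] at ht
  rw [mem_Iic, Fin.le_def]
  omega

section StarsUpTo

variable {J : Fin m} (hstar : ∀ j : Fin m, k ≤ j → j ≤ J → insert j (lowSet m k) ∈ 𝒢)
include hstar

lemma patternBox_sdiff_subset_boxShadow (hn : ∀ t, 0 < n t) :
    patternBox n (lowSet m k) ∅ \ patternBox n (lowSet m k) (Iic J) ⊆ boxShadow n 𝒢 := by
  intro b hb
  simp only [mem_sdiff, mem_patternBox hn, not_and, not_forall] at hb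
  obtain ⟨⟨hbox, hpos, -⟩, hnot⟩ := hb
  obtain ⟨j, hjJ, hjk, hbj⟩ := hnot hbox hpos
  rw [mem_Iic] at hjJ
  rw [mem_lowSet, not_lt] at hjk
  refine mem_boxShadow.mpr ⟨hbox, _, hstar j hjk hjJ, fun t ht => ?_⟩
  rcases mem_insert.mp ht with rfl | ht
  exacts [hbj, hpos t ht]

lemma card_patternBox_sub_le_card_boxShadow (hn : ∀ t, 0 < n t) (hkJ : k ≤ J) :
    (∏ t ∈ lowSet m k, (n t - 1)) * ∏ t ∈ (lowSet m k)ᶜ, n t -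
        (∏ t ∈ lowSet m k, (n t - 1)) * ∏ t ∈ (Iic J)ᶜ, n t ≤ #(boxShadow n 𝒢) := by
  have hLJ : lowSet m k ⊆ Iic J := lowSet_subset_Iic (by omega)
  calc _ = #(patternBox n (lowSet m k) ∅) - #(patternBox n (lowSet m k) (Iic J)) := by
        rw [card_patternBox, card_patternBox, union_empty, union_eq_right.mpr hLJ]
    _ ≤ #(patternBox n (lowSet m k) ∅ \ patternBox n (lowSet m k) (Iic J)) := le_card_sdiff _ _
    _ ≤ #(boxShadow n 𝒢) := card_le_card (patternBox_sdiff_subset_boxShadow hstar hn)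

lemma card_patternBox_le_card_boxShadow (hn : ∀ t, 2 ≤ n t) (hmono : Monotone n)
    (hsz : (𝒢 : Set (Finset (Fin m))).Sized (k + 1)) (hkJ : k ≤ J)
    (hJ : ∀ s ∈ 𝒢, ∀ t ∈ s, t ≤ J) {a : Finset (Fin m)} (ha : a ∈ 𝒢) (hLa : ¬ lowSet m k ⊆ a) :
    #(patternBox n (lowSet m k) ∅) ≤ #(boxShadow n 𝒢) := by
  have hn0 : ∀ t, 0 < n t := fun t => by have := hn t; omega
  obtain ⟨z, hzL, hza⟩ := not_subset.mp hLa
  set posL := patternBox n (lowSet m k) ∅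
  set zeroJ := patternBox n (lowSet m k) (Iic J)
  set posA := patternBox n a (Iic J)
  have hLJ : lowSet m k ⊆ Iic J := lowSet_subset_Iic (by omega)
  have hcard : #zeroJ ≤ #posA := by
    rw [card_patternBox, card_patternBox, union_eq_right.mpr hLJ,
      union_eq_right.mpr fun t ht => mem_Iic.mpr (hJ a ha t ht)]
    exact Nat.mul_le_mul_right _ <|
      prod_lowSet_le_prod (fun _ _ h => Nat.sub_le_sub_right (hmono h) 1)
        (fun t => by have := hn t; omega) (by rw [hsz ha]; omega)
  have hdisj : Disjoint (posL \ zeroJ) posA :=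
    (disjoint_patternBox hn0 hzL (hLJ hzL) hza).mono_left sdiff_subset
  calc #posL ≤ #(posL \ zeroJ) + #posA := by have := le_card_sdiff zeroJ posL; omega
    _ = #((posL \ zeroJ) ∪ posA) := (card_union_of_disjoint hdisj).symm
    _ ≤ #(boxShadow n 𝒢) := card_le_card (union_subset
        (patternBox_sdiff_subset_boxShadow hstar hn0) (patternBox_subset_boxShadow hn0 ha))

end StarsUpTo

theorem IsShifted.le_card_boxShadow (hn : ∀ t, 2 ≤ n t) (hmono : Monotone n)
    (h𝒢 : IsShifted 𝒢) (hsz : (𝒢 : Set (Finset (Fin m))).Sized (k + 1)) :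
    (∏ t ∈ lowSet m k, (n t - 1)) * ∏ t ∈ (lowSet m k)ᶜ, n t -
        (∏ t ∈ lowSet m k, (n t - 1)) * ∏ t ∈ (lowSet m (k + #𝒢))ᶜ, n t ≤
      #(boxShadow n 𝒢) := by
  rcases 𝒢.eq_empty_or_nonempty with rfl | hne
  · simp
  obtain ⟨J, hkJ, hJ, hstar⟩ := h𝒢.exists_insert_lowSet_mem hsz hne
  have hn0 : ∀ t, 0 < n t := fun t => by have := hn t; omega
  by_cases hL : ∀ s ∈ 𝒢, lowSet m k ⊆ s
  · have hr := card_add_le_of_lowSet_subset hsz hkJ hJ hL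
    refine le_trans ?_ (card_patternBox_sub_le_card_boxShadow hstar hn0 hkJ)
    gcongr
    exacts [fun t _ _ => hn0 t, lowSet_subset_Iic hr]
  · push Not at hL
    obtain ⟨a, ha, hLa⟩ := hL
    refine le_trans ?_ (card_patternBox_le_card_boxShadow hstar hn hmono hsz hkJ hJ ha hLa)
    rw [card_patternBox, union_empty]
    exact Nat.sub_le _ _

theorem le_card_boxShadow (hn : ∀ t, 2 ≤ n t) (hmono : Monotone n)
    (hsz : (𝒢 : Set (Finset (Fin m))).Sized (k + 1)) :
    (∏ t ∈ lowSet m k, (n t - 1)) * ∏ t ∈ (lowSet m k)ᶜ, n t -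
        (∏ t ∈ lowSet m k, (n t - 1)) * ∏ t ∈ (lowSet m (k + #𝒢))ᶜ, n t ≤
      #(boxShadow n 𝒢) := by
  obtain ⟨ℋ, hℋ, hℋsz, hcard, hle⟩ := exists_isShifted_card_boxShadow_le hmono hsz
  rw [← hcard]
  exact (hℋ.le_card_boxShadow hn hmono hℋsz).trans hle

end Counting

section SupportFamily

variable {m d : ℕ} {M : Finset (Fin m → ℕ)}

def supportFamily (M : Finset (Fin m → ℕ)) : Finset (Finset (Fin m)) :=
  M.image fun a => ({t | a t ≠ 0} : Finset (Fin m))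

lemma card_supportFamily (hM : ↑M ⊆ Sd m d) : #(supportFamily M) = #M := by
  refine card_image_of_injOn fun a ha a' ha' h => funext fun t => ?_
  have hat := (hM ha).1 t
  have hat' := (hM ha').1 t
  have := congrArg (t ∈ ·) h
  simp only [mem_filter, mem_univ, true_and, eq_iff_iff] at this
  omega

lemma sized_supportFamily (hM : ↑M ⊆ Sd m d) :
    (supportFamily M : Set (Finset (Fin m))).Sized d := by
  intro s hs
  obtain ⟨a, ha, rfl⟩ := mem_image.mp (mem_coe.mp hs)
  rw [card_filter, ← (hM ha).2]
  exact sum_congr rfl fun t _ => by have := (hM ha).1 t; split_ifs <;> omega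

lemma nablaX_eq_boxShadow {F : Type*} (A : Fin m → Finset F) (hM : ↑M ⊆ Sd m d) :
    nablaX A ↑M = boxShadow (fun t => (A t).card) (supportFamily M) := by
  ext b
  simp only [nablaX, BX, mem_filter, Fintype.mem_piFinset, mem_range, mem_boxShadow,
    supportFamily, exists_mem_image, mem_univ, true_and]
  refine and_congr_right fun _ => exists_congr fun a => and_congr_right fun ha =>
    forall_congr' fun t => ?_
  have := (hM ha).1 t
  omega

end SupportFamily

lemma prod_Icc_eq_prod_fin {β : Type*} [CommMonoid β] {m a b : ℕ} (g : ℕ → β) (ha : 1 ≤ a) (hb : b ≤ m) :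
    ∏ i ∈ Icc a b, g i =
      ∏ t ∈ ({t | a ≤ (t : ℕ) + 1 ∧ (t : ℕ) + 1 ≤ b} : Finset (Fin m)), g (t + 1) := by
  symm
  refine prod_nbij (fun t => t + 1) (fun t ht => ?_) (fun t _ t' _ h => Fin.ext (by simpa using h))
    (fun i hi => ?_) (fun _ _ => rfl)
  · simpa using ht
  · simp only [coe_Icc, Set.mem_Icc] at hi
    exact ⟨⟨i - 1, by omega⟩, by simp only [coe_filter, mem_univ, true_and, Set.mem_ofPred]; omega,
      by simp only; omega⟩

lemma nval_succ {F : Type*} {m : ℕ} (A : Fin m → Finset F) (t : Fin m) :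
    nval A (t + 1) = (A t).card := by
  simp [nval]

lemma prod_Icc_nval_bound_eq {F : Type*} {m k r : ℕ} (A : Fin m → Finset F) (hk : k < m)
    (hr : k + r ≤ m) :
    (∏ i ∈ Icc 1 k, (nval A i - 1)) * (∏ i ∈ Icc (k + 1 + r) m, nval A i) *
        ((∏ i ∈ Icc (k + 1) (k + 1 + r - 1), nval A i) - 1) =
      (∏ t ∈ lowSet m k, ((A t).card - 1)) * ∏ t ∈ (lowSet m k)ᶜ, (A t).card -
        (∏ t ∈ lowSet m k, ((A t).card - 1)) * ∏ t ∈ (lowSet m (k + r))ᶜ, (A t).card := by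
  rw [prod_Icc_eq_prod_fin (m := m) (b := k) _ le_rfl hk.le,
    prod_Icc_eq_prod_fin (m := m) (a := k + 1 + r) _ (by omega) le_rfl,
    prod_Icc_eq_prod_fin (m := m) (a := k + 1) (b := k + 1 + r - 1) _ (by omega) (by omega)]
  simp only [nval_succ]
  have hlow : ({t | 1 ≤ (t : ℕ) + 1 ∧ (t : ℕ) + 1 ≤ k} : Finset (Fin m)) = lowSet m k := by
    ext t; simp only [mem_filter, mem_univ, true_and, mem_lowSet]; omega
  have hhigh : ({t | k + 1 + r ≤ (t : ℕ) + 1 ∧ (t : ℕ) + 1 ≤ m} : Finset (Fin m)) =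
      (lowSet m (k + r))ᶜ := by
    ext t; simp only [mem_filter, mem_univ, true_and, mem_compl, mem_lowSet]; omega
  have hsplit : (lowSet m k)ᶜ =
      ({t | k + 1 ≤ (t : ℕ) + 1 ∧ (t : ℕ) + 1 ≤ k + 1 + r - 1} : Finset (Fin m)) ∪
        (lowSet m (k + r))ᶜ := by
    ext t; simp only [mem_filter, mem_univ, true_and, mem_compl, mem_lowSet, mem_union]; omega
  rw [hlow, hhigh, hsplit, prod_union (disjoint_left.mpr fun t ht ht' => by
      simp only [mem_filter, mem_univ, true_and, mem_compl, mem_lowSet] at ht ht'; omega),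
    Nat.mul_sub_one]
  ring_nf

theorem shadow_card_lower_bound_general
    {F : Type*} {m d r : ℕ}
    (A : Fin m → Finset F)
    (hcard : ∀ i, 2 ≤ (A i).card)
    (hmono : ∀ i j : Fin m, i ≤ j → (A i).card ≤ (A j).card)
    (hd1 : 1 ≤ d) (hdm : d ≤ m) (hr2 : r ≤ m + 1 - d)
    (M : Finset (Fin m → ℕ)) (hM : ↑M ⊆ Sd m d) (hMcard : M.card = r) :
    (∏ i ∈ Finset.Icc 1 (d - 1), (nval A i - 1)) *
        (∏ i ∈ Finset.Icc (d + r) m, nval A i) *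
        ((∏ i ∈ Finset.Icc d (d + r - 1), nval A i) - 1) ≤
      (nablaX A ↑M).card := by
  obtain ⟨k, rfl⟩ : ∃ k, d = k + 1 := ⟨d - 1, by omega⟩
  rw [Nat.add_sub_cancel, prod_Icc_nval_bound_eq A (by omega) (by omega),
    nablaX_eq_boxShadow A hM]
  have hbound := le_card_boxShadow hcard (fun i j h => hmono i j h) (sized_supportFamily hM)
  rwa [card_supportFamily hM, hMcard] at hbound

/-- Let `1 ≤ d ≤ m`, `1 ≤ r ≤ m+1−d`, and assume the growth condition
`n_{d+r−1}·n_{d−1}·(n_i+n_j−1) ≤ n_i·n_j·(n_{d+r−1}+n_{d−1}−1)` for all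
`d ≤ i < j ≤ d+r−2`. Then every `M ⊆ S_d(m)` with `|M| = r` satisfies
`|∇_X(M)| ≥ ∏_{i=1}^{d−1}(n_i−1) · ∏_{i=d+r}^{m} n_i · (∏_{i=d}^{d+r−1} n_i − 1)`. -/
theorem shadow_card_lower_bound
    {F : Type*} [Field F] [Fintype F] [DecidableEq F] {m d r : ℕ}
    (A : Fin m → Finset F)
    (hcard : ∀ i, 2 ≤ (A i).card)
    (hmono : ∀ i j : Fin m, i ≤ j → (A i).card ≤ (A j).card)
    (hd1 : 1 ≤ d) (hdm : d ≤ m) (hr1 : 1 ≤ r) (hr2 : r ≤ m + 1 - d)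
    (hcond : ∀ i j : ℕ, d ≤ i → i < j → j ≤ d + r - 2 →
      nval A (d + r - 1) * nval A (d - 1) * (nval A i + nval A j - 1) ≤
        nval A i * nval A j * (nval A (d + r - 1) + nval A (d - 1) - 1))
    (M : Finset (Fin m → ℕ)) (hM : ↑M ⊆ Sd m d) (hMcard : M.card = r) :
    (∏ i ∈ Finset.Icc 1 (d - 1), (nval A i - 1)) *
        (∏ i ∈ Finset.Icc (d + r) m, nval A i) *
        ((∏ i ∈ Finset.Icc d (d + r - 1), nval A i) - 1) ≤
      (nablaX A ↑M).card :=
  shadow_card_lower_bound_general A hcard hmono hd1 hdm hr2 M hM hMcard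
end

section
/- Let 1 ≤ d ≤ m, let a_1, …, a_r ∈ S_d(m) be distinct exponent vectors (r ≥ 2), and for each 1 ≤ i ≤ r−1 choose an index j_i ∈ supp(a_i) ∖ supp(a_r) (such an index exists since a_i ≠ a_r and |a_i| = |a_r| = d); set J = {j_1, …, j_{r−1}}. Then |∇_X({a_r}) ∖ ∇_X({a_1,…,a_{r−1}})| ≥ ∏_{i ∈ supp(a_r)} (n_i − 1) · ∏_{i ∈ {1,…,m} ∖ (supp(a_r) ∪ J)} n_i. -/
/-!
The points `b` of the box `B_X` with `a_r ≤ b` and `b_j = 0` for every `j ∈ J` form a box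
inside `∇_X({a_r}) ∖ ∇_X({a_1,…,a_{r-1}})`: no `a_i` with `i < r` divides such a `b`, since
`a_i` is nonzero at `j_i ∈ J`. Its side is `n_i - 1` on `supp(a_r)`, `1` on `J` and `n_i`
elsewhere.
-/

open Finset

namespace Footprint

variable {F : Type*} {m : ℕ}

def vanishingBox (A : Fin m → Finset F) (c : Fin m → ℕ) (J : Finset (Fin m)) :
    Finset (Fin m → ℕ) :=
  Fintype.piFinset fun i => if i ∈ J then {0} else Ico (c i) (A i).card

theorem vanishingBox_subset_nablaX_sdiff (A : Fin m → Finset F) {c : Fin m → ℕ}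
    {J : Finset (Fin m)} {N : Set (Fin m → ℕ)} (hA : ∀ i ∈ J, 0 < (A i).card)
    (hcJ : ∀ i ∈ J, c i = 0) (hN : ∀ a ∈ N, ∃ i ∈ J, a i ≠ 0) :
    vanishingBox A c J ⊆ nablaX A {c} \ nablaX A N := by
  intro b hb
  simp only [vanishingBox, Fintype.mem_piFinset] at hb
  have hbJ : ∀ i ∈ J, b i = 0 := fun i hi => by simpa [hi] using hb i
  have hbB : b ∈ BX A := by
    refine Fintype.mem_piFinset.2 fun i => mem_range.2 ?_
    by_cases hi : i ∈ J
    · exact hbJ i hi ▸ hA i hi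
    · simpa [hi] using (mem_Ico.1 (by simpa [hi] using hb i)).2
  have hcb : ∀ i, c i ≤ b i := fun i => by
    by_cases hi : i ∈ J
    · simp [hcJ i hi]
    · exact (mem_Ico.1 (by simpa [hi] using hb i)).1
  simp only [nablaX, mem_sdiff, mem_filter, Set.mem_singleton_iff, exists_eq_left, not_and,
    not_exists]
  refine ⟨⟨hbB, hcb⟩, fun _ a haN hab => ?_⟩
  obtain ⟨i, hiJ, hai⟩ := hN a haN
  exact hai (Nat.le_zero.1 (hbJ i hiJ ▸ hab i))

theorem card_vanishingBox (A : Fin m → Finset F) (c : Fin m → ℕ) (J : Finset (Fin m)) :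
    (vanishingBox A c J).card = ∏ i ∈ univ \ J, ((A i).card - c i) := by
  simp_rw [vanishingBox, Fintype.card_piFinset, apply_ite card, card_singleton, Nat.card_Ico,
    prod_ite, prod_const_one, one_mul, filter_not, filter_mem_eq_inter, univ_inter]

theorem prod_sdiff_sub_of_le_one (n c : Fin m → ℕ) {J : Finset (Fin m)}
    (hc : ∀ i, c i ≤ 1) (hcJ : ∀ i ∈ J, c i = 0) :
    ∏ i ∈ univ \ J, (n i - c i) =
      (∏ i ∈ univ.filter (fun i => c i ≠ 0), (n i - 1)) *
        ∏ i ∈ univ \ (univ.filter (fun i => c i ≠ 0) ∪ J), n i := by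
  set S := univ.filter fun i => c i ≠ 0
  have hSJ : S ⊆ univ \ J := fun i hi =>
    mem_sdiff.2 ⟨mem_univ i, fun hiJ => (mem_filter.1 hi).2 (hcJ i hiJ)⟩
  rw [← prod_sdiff hSJ, sdiff_sdiff_left, sup_eq_union, union_comm J S, mul_comm]
  congr 1
  · refine prod_congr rfl fun i hi => ?_
    have : c i = 1 := by have := (mem_filter.1 hi).2; have := hc i; omega
    rw [this]
  · refine prod_congr rfl fun i hi => ?_
    have : c i = 0 := by simpa [S] using fun h => (mem_sdiff.1 hi).2 (mem_union_left J h)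
    rw [this, Nat.sub_zero]

end Footprint

open Footprint

theorem shadow_diff_card_lower_bound_general
    {F : Type*} {m d r : ℕ}
    (A : Fin m → Finset F)
    (hcard : ∀ i, 2 ≤ (A i).card)
    (a : Fin (r + 1) → (Fin m → ℕ))
    (ha : ∀ i, a i ∈ Sd m d)
    (j : Fin r → Fin m)
    (hj : ∀ i : Fin r, a i.castSucc (j i) ≠ 0 ∧ a (Fin.last r) (j i) = 0) :
    (∏ i ∈ Finset.univ.filter (fun i : Fin m => a (Fin.last r) i ≠ 0), ((A i).card - 1)) *
        (∏ i ∈ Finset.univ \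
            (Finset.univ.filter (fun i : Fin m => a (Fin.last r) i ≠ 0) ∪
              Finset.image j Finset.univ), (A i).card) ≤
      ((nablaX A {a (Fin.last r)}) \
        (nablaX A (Set.range (fun i : Fin r => a i.castSucc)))).card := by
  have hcJ : ∀ x ∈ image j univ, a (Fin.last r) x = 0 := by
    simpa using fun i => (hj i).2
  rw [← prod_sdiff_sub_of_le_one _ _ (ha (Fin.last r)).1 hcJ, ← card_vanishingBox]
  refine card_le_card (vanishingBox_subset_nablaX_sdiff A (fun i _ => by have := hcard i; omega)
    hcJ ?_)
  rintro _ ⟨i, rfl⟩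
  exact ⟨j i, mem_image_of_mem j (mem_univ i), (hj i).1⟩

/-- Let `a_1, …, a_r, a_{r+1} ∈ S_d(m)` be distinct (here indexed by
`Fin (r+1)` with `r ≥ 1`, so there are at least two of them, and `a (Fin.last r)` plays
the role of the paper's `a_r`). For each `i < r` choose `j_i ∈ supp(a_i) ∖ supp(a_r)` and
set `J = {j_1,…,j_{r−1}}`. Then
`|∇_X({a_r}) ∖ ∇_X({a_1,…,a_{r−1}})| ≥ ∏_{i ∈ supp(a_r)}(n_i−1) · ∏_{i ∉ supp(a_r) ∪ J} n_i`. -/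
theorem shadow_diff_card_lower_bound
    {F : Type*} [Field F] [Fintype F] [DecidableEq F] {m d r : ℕ}
    (A : Fin m → Finset F)
    (hcard : ∀ i, 2 ≤ (A i).card)
    (hmono : ∀ i j : Fin m, i ≤ j → (A i).card ≤ (A j).card)
    (hd1 : 1 ≤ d) (hdm : d ≤ m) (hr : 1 ≤ r)
    (a : Fin (r + 1) → (Fin m → ℕ)) (hainj : Function.Injective a)
    (ha : ∀ i, a i ∈ Sd m d)
    (j : Fin r → Fin m)
    (hj : ∀ i : Fin r, a i.castSucc (j i) ≠ 0 ∧ a (Fin.last r) (j i) = 0) :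
    (∏ i ∈ Finset.univ.filter (fun i : Fin m => a (Fin.last r) i ≠ 0), ((A i).card - 1)) *
        (∏ i ∈ Finset.univ \
            (Finset.univ.filter (fun i : Fin m => a (Fin.last r) i ≠ 0) ∪
              Finset.image j Finset.univ), (A i).card) ≤
      ((nablaX A {a (Fin.last r)}) \
        (nablaX A (Set.range (fun i : Fin r => a i.castSucc)))).card :=
  shadow_diff_card_lower_bound_general A hcard a ha j hj
end

section
/- Let 1 ≤ d ≤ m and 1 ≤ r ≤ m+1−d, and consider the set S_d(r) ⊆ S_d(m) of r exponent vectors given by α^{(i)} = e_1 + ⋯ + e_{d−1} + e_{d+i−1} for 1 ≤ i ≤ r (corresponding to the monomials x_1⋯x_{d−1}x_{d+i−1}), where e_j denotes the j-th standard basis vector of {0,1}^m. Then |∇_X(S_d(r))| = ∏_{j=1}^{d−1}(n_j − 1) · ∏_{j=d+r}^{m} n_j · (∏_{j=d}^{d+r−1} n_j − 1). -/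
/-!
A point `b` of the box `B_X` lies in the shadow iff its first `d - 1` coordinates are nonzero and
one of the coordinates `d, …, d + r - 1` is nonzero. The first condition cuts the box down to a
smaller box with `n_j - 1` values in each of the first `d - 1` coordinates. Inside that box the
points failing the second condition are those vanishing on the middle block, which form a box
of their own; subtracting it leaves the factor `∏_{j=d}^{d+r-1} n_j - 1`.
-/

open Finset

theorem card_filter_range_ne_zero (n : ℕ) : #((range n).filter (· ≠ 0)) = n - 1 := by
  rw [filter_ne', card_erase_eq_ite]
  split_ifs <;> simp_all

namespace Fintype

variable {ι α : Type*} [Fintype ι] [DecidableEq ι]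

theorem filter_piFinset_forall_mem (T : ι → Finset α) (I : Finset ι) (p : ι → α → Prop)
    [∀ i, DecidablePred (p i)] :
    (piFinset T).filter (fun b => ∀ i ∈ I, p i (b i)) =
      piFinset (I.piecewise (fun i => (T i).filter (p i)) T) := by
  ext b
  simp only [mem_filter, mem_piFinset, Finset.piecewise]
  constructor
  · rintro ⟨hT, hp⟩ i
    split_ifs with hi
    · exact mem_filter.2 ⟨hT i, hp i hi⟩
    · exact hT i
  · intro h
    refine ⟨fun i => ?_, fun i hi => ?_⟩
    · have := h i
      split_ifs at this
      exacts [(mem_filter.1 this).1, this]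
    · have := h i
      rw [if_pos hi] at this
      exact (mem_filter.1 this).2

theorem card_piFinset_piecewise (I : Finset ι) (S T : ι → Finset α) :
    #(piFinset (I.piecewise S T)) = (∏ i ∈ I, #(S i)) * ∏ i ∈ Iᶜ, #(T i) := by
  rw [card_piFinset, ← prod_mul_prod_compl I]
  congr 1 <;> refine Finset.prod_congr rfl fun i hi => ?_
  · rw [piecewise_eq_of_mem _ _ _ hi]
  · rw [piecewise_eq_of_notMem _ _ _ (mem_compl.1 hi)]

theorem card_filter_piFinset_exists_ne [DecidableEq α] (T : ι → Finset α) (a : ι → α)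
    (J : Finset ι) (ha : ∀ j ∈ J, a j ∈ T j) :
    #((piFinset T).filter fun b => ∃ j ∈ J, b j ≠ a j) =
      ((∏ j ∈ J, #(T j)) - 1) * ∏ i ∈ Jᶜ, #(T i) := by
  have hsplit :=
    card_filter_add_card_filter_not (s := piFinset T) fun b => ∃ j ∈ J, b j ≠ a j
  have hagree :
      #((piFinset T).filter fun b => ¬ ∃ j ∈ J, b j ≠ a j) = ∏ i ∈ Jᶜ, #(T i) := by
    simp only [not_exists, not_and, not_not]
    rw [filter_piFinset_forall_mem T J fun i x => x = a i, card_piFinset_piecewise,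
      Finset.prod_congr rfl fun j hj => by rw [filter_eq', if_pos (ha j hj), card_singleton],
      Finset.prod_const_one, one_mul]
  rw [hagree, card_piFinset, ← prod_mul_prod_compl J] at hsplit
  rw [Nat.sub_one_mul]
  omega

theorem card_filter_forall_ne_zero_exists_ne_zero (n : ι → ℕ) {I J : Finset ι}
    (hIJ : Disjoint I J) (hJ : ∀ j ∈ J, 0 < n j) :
    #((piFinset fun i => range (n i)).filter
        fun b => (∀ i ∈ I, b i ≠ 0) ∧ ∃ j ∈ J, b j ≠ 0) =
      (∏ i ∈ I, (n i - 1)) * (∏ i ∈ (I ∪ J)ᶜ, n i) * ((∏ j ∈ J, n j) - 1) := by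
  set T := I.piecewise (fun i => (range (n i)).filter (· ≠ 0)) fun i => range (n i) with hT
  have hTJ : ∀ j ∈ J, T j = range (n j) := fun j hj =>
    piecewise_eq_of_notMem _ _ _ (disjoint_right.1 hIJ hj)
  have hrest : ∏ i ∈ Jᶜ, #(T i) = (∏ i ∈ I, (n i - 1)) * ∏ i ∈ (I ∪ J)ᶜ, n i := by
    rw [← prod_inter_mul_prod_sdiff Jᶜ I,
      inter_eq_right.2 fun i hi => mem_compl.2 (disjoint_left.1 hIJ hi),
      show Jᶜ \ I = (I ∪ J)ᶜ by ext; simp [and_comm]]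
    congr 1 <;> refine Finset.prod_congr rfl fun i hi => ?_
    · rw [hT, piecewise_eq_of_mem _ _ _ hi, card_filter_range_ne_zero]
    · rw [hT, piecewise_eq_of_notMem _ _ _ fun h => mem_compl.1 hi (mem_union_left J h),
        Finset.card_range]
  have hcount := card_filter_piFinset_exists_ne T 0 J fun j hj => by
    simpa [hTJ j hj] using hJ j hj
  simp only [Pi.zero_apply] at hcount
  rw [← filter_filter, filter_piFinset_forall_mem (fun i => range (n i)) I fun _ x => x ≠ 0,
    hcount, Finset.prod_congr rfl fun j hj => by rw [hTJ j hj, Finset.card_range], hrest]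
  ring

end Fintype

theorem nval_coe_add_one {F : Type*} {m : ℕ} (A : Fin m → Finset F) (j : Fin m) :
    nval A (j + 1) = #(A j) := by
  rw [nval, dif_pos ⟨by omega, j.2⟩]
  rfl

theorem prod_Icc_nval {F M : Type*} [CommMonoid M] {m a b : ℕ}
    (A : Fin m → Finset F) (f : ℕ → M) (s : Finset (Fin m))
    (hs : ∀ j : Fin m, j ∈ s ↔ a ≤ j + 1 ∧ j + 1 ≤ b) (ha : 1 ≤ a) (hb : b ≤ m) :
    ∏ k ∈ Icc a b, f (nval A k) = ∏ j ∈ s, f #(A j) := by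
  symm
  refine prod_nbij (fun j => j + 1) (fun j hj => mem_Icc.2 ((hs j).1 hj))
    (fun i _ j _ h => Fin.ext (by simpa using h)) (fun k hk => ?_)
    (fun j _ => by rw [nval_coe_add_one])
  obtain ⟨hak, hkb⟩ := mem_Icc.1 hk
  exact ⟨⟨k - 1, by omega⟩, (hs _).2 (by simp only; omega), by simp only; omega⟩

theorem exists_Sdr_le_iff {m d r : ℕ} (hdr : d - 1 + r ≤ m) (b : Fin m → ℕ) :
    (∃ i : Fin r, ∀ t : Fin m,
        (if (t : ℕ) < d - 1 ∨ (t : ℕ) = d - 1 + (i : ℕ) then 1 else 0) ≤ b t) ↔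
      (∀ t : Fin m, (t : ℕ) < d - 1 → b t ≠ 0) ∧
        ∃ t : Fin m, (d - 1 ≤ t ∧ t < d - 1 + r) ∧ b t ≠ 0 := by
  constructor
  · rintro ⟨i, hi⟩
    refine ⟨fun t ht => ?_, ⟨d - 1 + i, by omega⟩, by simp, ?_⟩
    · simpa [ht, Nat.one_le_iff_ne_zero] using hi t
    · simpa [Nat.one_le_iff_ne_zero] using hi ⟨d - 1 + i, by omega⟩
  · rintro ⟨hI, t, ⟨htd, htr⟩, ht⟩
    refine ⟨⟨t - (d - 1), by omega⟩, fun s => ?_⟩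
    split_ifs with hs
    · rcases hs with hs | hs
      · exact Nat.one_le_iff_ne_zero.2 (hI s hs)
      · rw [show s = t from Fin.ext (by simp only at hs; omega)]
        exact Nat.one_le_iff_ne_zero.2 ht
    · exact Nat.zero_le _

theorem shadow_card_of_Sdr_general
    {F : Type*} {m d r : ℕ}
    (A : Fin m → Finset F)
    (hcard : ∀ i, 2 ≤ (A i).card)
    (hd1 : 1 ≤ d) (hdm : d ≤ m) (hr2 : r ≤ m + 1 - d) :
    (nablaX A (Set.range (fun i : Fin r => fun t : Fin m =>
        if (t : ℕ) < d - 1 ∨ (t : ℕ) = d - 1 + (i : ℕ) then 1 else 0))).card =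
      (∏ j ∈ Finset.Icc 1 (d - 1), (nval A j - 1)) *
        (∏ j ∈ Finset.Icc (d + r) m, nval A j) *
        ((∏ j ∈ Finset.Icc d (d + r - 1), nval A j) - 1) := by
  let I : Finset (Fin m) := univ.filter fun t => (t : ℕ) < d - 1
  let J : Finset (Fin m) := univ.filter fun t => d - 1 ≤ t ∧ t < d - 1 + r
  have hIJ : Disjoint I J := disjoint_filter.2 fun t _ h₁ h₂ => by omega
  trans #((BX A).filter fun b => (∀ i ∈ I, b i ≠ 0) ∧ ∃ j ∈ J, b j ≠ 0)
  · congr 1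
    ext b
    simp only [nablaX, mem_filter, Set.exists_range_iff,
      exists_Sdr_le_iff (show d - 1 + r ≤ m by omega), I, J, mem_univ, true_and]
  rw [BX, prod_Icc_nval A (· - 1) I (by simp [I]) le_rfl (by omega),
    prod_Icc_nval A (fun n => n) (I ∪ J)ᶜ (by simp [I, J]; omega) (by omega) le_rfl,
    prod_Icc_nval A (fun n => n) J (by simp [J]; omega) hd1 (by omega)]
  -- `convert` only reconciles the decidability instances, which are `Fin`-specific in the goal.
  convert Fintype.card_filter_forall_ne_zero_exists_ne_zero (fun i => #(A i)) hIJ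
    fun j _ => (by have := hcard j; omega : 0 < #(A j))

/-- Let `1 ≤ d ≤ m` and `1 ≤ r ≤ m+1−d`, and consider the set
`S_d(r) = {x_1⋯x_{d−1}x_{d+i−1} : 1 ≤ i ≤ r}` of exponent vectors (in 0-based indexing,
the `i`-th vector has ones exactly at positions `0,…,d−2` and `d−1+i`). Then
`|∇_X(S_d(r))| = ∏_{j=1}^{d−1}(n_j−1) · ∏_{j=d+r}^{m} n_j · (∏_{j=d}^{d+r−1} n_j − 1)`. -/
theorem shadow_card_of_Sdr
    {F : Type*} [Field F] [Fintype F] [DecidableEq F] {m d r : ℕ}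
    (A : Fin m → Finset F)
    (hcard : ∀ i, 2 ≤ (A i).card)
    (hmono : ∀ i j : Fin m, i ≤ j → (A i).card ≤ (A j).card)
    (hd1 : 1 ≤ d) (hdm : d ≤ m) (hr1 : 1 ≤ r) (hr2 : r ≤ m + 1 - d) :
    (nablaX A (Set.range (fun i : Fin r => fun t : Fin m =>
        if (t : ℕ) < d - 1 ∨ (t : ℕ) = d - 1 + (i : ℕ) then 1 else 0))).card =
      (∏ j ∈ Finset.Icc 1 (d - 1), (nval A j - 1)) *
        (∏ j ∈ Finset.Icc (d + r) m, nval A j) *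
        ((∏ j ∈ Finset.Icc d (d + r - 1), nval A j) - 1) :=
  shadow_card_of_Sdr_general A hcard hd1 hdm hr2
end

section
/- Let X = A_1 × ⋯ × A_m be a Cartesian set over F_q with |A_i| ≥ 2 for all i, and let 0 ≤ d ≤ m. Then dim_{F_q}(C_d^{X,S}) = C(m,d) and dim_{F_q}(C_{≤d}^{X,S}) = Σ_{i=0}^{d} C(m,i). -/
/-!
Identify square-free exponent vectors with subsets `S` of the variables, so that both codes are
spanned by subfamilies of the evaluated monomials `x^S`; it suffices that all `2^m` of them are
linearly independent. Pick `u i ≠ v i` in each `A i` and restrict to the `2^m` corners of the grid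
`∏ {u i, v i}`. The indicator of a corner is a product of affine functions of the coordinates,
which expands into a combination of the `x^S`; so the restricted monomials span the
`2^m`-dimensional space of functions on the corners and are therefore independent.
-/

open Finset Submodule

section SquarefreeMonomial

variable {F ι : Type*} [Field F] [Fintype ι] (A : ι → Finset F)

def sqfreeMonomial (S : Finset ι) (P : {P : ι → F // ∀ i, P i ∈ A i}) : F := ∏ i ∈ S, P.1 i

theorem prod_affine_mem_span_sqfreeMonomial [DecidableEq ι] (a b : ι → F) :
    (fun P : {P : ι → F // ∀ i, P i ∈ A i} => ∏ i, (a i * P.1 i + b i)) ∈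
      span F (Set.range (sqfreeMonomial A)) := by
  have expand : (fun P : {P : ι → F // ∀ i, P i ∈ A i} => ∏ i, (a i * P.1 i + b i)) =
      ∑ S : Finset ι, ((∏ i ∈ S, a i) * ∏ i ∈ univ \ S, b i) • sqfreeMonomial A S := by
    ext P
    simp only [prod_add, powerset_univ, Finset.sum_apply, Pi.smul_apply, smul_eq_mul,
      sqfreeMonomial, prod_mul_distrib]
    exact sum_congr rfl fun _ _ => by ring
  rw [expand]
  exact sum_mem fun S _ => smul_mem _ _ (subset_span ⟨S, rfl⟩)

theorem linearIndependent_sqfreeMonomial (hA : ∀ i, (A i).Nontrivial) :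
    LinearIndependent F (sqfreeMonomial A) := by
  classical
  choose u hu v hv huv using hA
  let corner : Finset ι → {P : ι → F // ∀ i, P i ∈ A i} := fun R =>
    ⟨fun i => if i ∈ R then v i else u i, fun i => by dsimp only; split_ifs; exacts [hv i, hu i]⟩
  let restrict := LinearMap.funLeft F F corner
  have hsingle : ∀ R, Pi.single R 1 ∈ span F (Set.range (restrict ∘ sqfreeMonomial A)) := by
    intro R
    -- the `i`-th factor is the affine function equal to `1` at `(corner R) i` and `0` at the other
    -- value in `{u i, v i}`
    let a : ι → F := fun i => if i ∈ R then (v i - u i)⁻¹ else (u i - v i)⁻¹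
    let b : ι → F := fun i => if i ∈ R then -u i * (v i - u i)⁻¹ else -v i * (u i - v i)⁻¹
    have hfactor : ∀ R' i, a i * (corner R').1 i + b i = if (i ∈ R' ↔ i ∈ R) then 1 else 0 := by
      intro R' i
      have : v i - u i ≠ 0 := sub_ne_zero.mpr (huv i).symm
      have : u i - v i ≠ 0 := sub_ne_zero.mpr (huv i)
      by_cases h : i ∈ R <;> by_cases h' : i ∈ R' <;> simp [a, b, corner, h, h'] <;>
        field_simp <;> ring
    have hindicator : restrict (fun P => ∏ i, (a i * P.1 i + b i)) = Pi.single R 1 := by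
      ext R'
      simp only [restrict, LinearMap.funLeft_apply, hfactor, Fintype.prod_boole, Pi.single_apply,
        ← Finset.ext_iff]
    rw [← hindicator, Set.range_comp, span_image]
    exact mem_map_of_mem (prod_affine_mem_span_sqfreeMonomial A a b)
  refine LinearIndependent.of_comp restrict
    (linearIndependent_of_top_le_span_of_card_eq_finrank ?_ (by simp))
  rw [← (Pi.basisFun F (Finset ι)).span_eq, span_le]
  rintro _ ⟨R, rfl⟩
  simpa using hsingle R

theorem finrank_span_image_sqfreeMonomial (hA : ∀ i, (A i).Nontrivial) (s : Set (Finset ι)) :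
    Module.finrank F (span F (sqfreeMonomial A '' s)) = Nat.card s := by
  classical
  have h := finrank_span_eq_card
    ((linearIndependent_sqfreeMonomial A hA).comp _ (Subtype.val_injective (p := (· ∈ s))))
  rwa [Set.range_comp, Subtype.range_coe, ← Nat.card_eq_fintype_card] at h

end SquarefreeMonomial

theorem setOf_squarefree_eq_image {ι : Type*} [Fintype ι] [DecidableEq ι] (p : ℕ → Prop) :
    {a : ι → ℕ | (∀ i, a i ≤ 1) ∧ p (∑ i, a i)} =
      (fun S i => if i ∈ S then 1 else 0) '' {S : Finset ι | p #S} := by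
  ext a
  constructor
  · rintro ⟨ha, hp⟩
    have h01 : ∀ i, a i = if a i = 1 then 1 else 0 := fun i => by
      have := ha i; split_ifs <;> omega
    refine ⟨univ.filter (a · = 1), ?_, funext fun i => by simpa using (h01 i).symm⟩
    rwa [Set.mem_ofPred_eq, card_filter, ← sum_congr rfl fun i _ => h01 i]
  · rintro ⟨S, hS, rfl⟩
    refine ⟨fun i => by dsimp only; split_ifs <;> omega, ?_⟩
    simpa using hS

theorem Nat.card_finset_card_le (ι : Type*) [Fintype ι] (d : ℕ) :
    Nat.card {S : Finset ι // #S ≤ d} = ∑ i ∈ range (d + 1), (Fintype.card ι).choose i := by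
  classical
  rw [Nat.card_eq_fintype_card, Fintype.card_subtype,
    card_eq_sum_card_fiberwise (f := card) (t := range (d + 1)) fun S hS => by simp_all]
  refine sum_congr rfl fun i hi => ?_
  rw [filter_filter, ← Fintype.card_finset_len, Fintype.card_subtype]
  congr 2 with S
  rw [mem_range] at hi
  exact ⟨And.right, fun h => ⟨by omega, h⟩⟩

theorem evalCodeX_squarefree {F : Type*} [Field F] {m : ℕ} (A : Fin m → Finset F)
    (p : ℕ → Prop) :
    evalCodeX A {a | (∀ i, a i ≤ 1) ∧ p (∑ i, a i)} =
      span F (sqfreeMonomial A '' {S | p #S}) := by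
  rw [evalCodeX, setOf_squarefree_eq_image, Set.image_image]
  congr 2 with S P
  simp [sqfreeMonomial, pow_ite, prod_ite_mem]

theorem finrank_evalCodeX_squarefree {F : Type*} [Field F] {m : ℕ} (A : Fin m → Finset F)
    (hA : ∀ i, (A i).Nontrivial) (p : ℕ → Prop) :
    Module.finrank F (evalCodeX A {a | (∀ i, a i ≤ 1) ∧ p (∑ i, a i)}) =
      Nat.card {S : Finset (Fin m) // p #S} := by
  rw [evalCodeX_squarefree, finrank_span_image_sqfreeMonomial A hA, Set.coe_ofPred]

theorem dim_cartesian_squarefree_general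
    {F : Type*} [Field F] {m d : ℕ}
    (A : Fin m → Finset F)
    (hcard : ∀ i, 2 ≤ (A i).card) :
    Module.finrank F (evalCodeX A (Sd m d)) = m.choose d ∧
    Module.finrank F (evalCodeX A (Sle m d)) = ∑ i ∈ Finset.range (d + 1), m.choose i := by
  have hA : ∀ i, (A i).Nontrivial := fun i => one_lt_card_iff_nontrivial.mp (hcard i)
  constructor
  · rw [Sd, finrank_evalCodeX_squarefree A hA (· = d), Nat.card_eq_fintype_card,
      Fintype.card_finset_len, Fintype.card_fin]
  · rw [Sle, finrank_evalCodeX_squarefree A hA (· ≤ d), Nat.card_finset_card_le,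
      Fintype.card_fin]

/-- For a Cartesian set `X = A_1 × ⋯ × A_m` with `|A_i| ≥ 2` for all `i`
and `0 ≤ d ≤ m`, the Cartesian square-free codes satisfy `dim C_d^{X,S} = C(m,d)` and
`dim C_{≤d}^{X,S} = Σ_{i=0}^{d} C(m,i)`. -/
theorem dim_cartesian_squarefree
    {F : Type*} [Field F] [Fintype F] [DecidableEq F] {m d : ℕ}
    (A : Fin m → Finset F)
    (hcard : ∀ i, 2 ≤ (A i).card)
    (hmono : ∀ i j : Fin m, i ≤ j → (A i).card ≤ (A j).card)
    (hdm : d ≤ m) :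
    Module.finrank F (evalCodeX A (Sd m d)) = m.choose d ∧
    Module.finrank F (evalCodeX A (Sle m d)) = ∑ i ∈ Finset.range (d + 1), m.choose i :=
  dim_cartesian_squarefree_general A hcard
end

section
/- Let 1 ≤ d ≤ m+1 and let ξ be a primitive element of F_q. Identify F_q^{m+1} ∖ {0} with the product (Fin (q−1)) × P^m via the bijection (i, Q) ↦ ξ^i·Q. Under this identification, the affine square-free code C_d^{A,S}(m+1) ⊆ F_q^{(Fin (q−1)) × P^m} equals the set of vectors {(i, Q) ↦ ξ^{d·i}·c(Q) : c ∈ C_d^{P,S}(m)}; that is, C_d^{A,S}(m+1) = (1, ξ^d, ξ^{2d}, …, ξ^{d(q−2)}) ⊗ C_d^{P,S}(m). -/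
/-- Evaluation code: the span of the evaluations of the monomials `x^a`, `a ∈ S`, at the
family of points `pt : Y → F^N`. -/
noncomputable def evCode {F : Type*} [Field F] {N : ℕ} {Y : Type*} (pt : Y → (Fin N → F))
    (S : Set (Fin N → ℕ)) : Submodule F (Y → F) :=
  Submodule.span F ((fun (a : Fin N → ℕ) (y : Y) => ∏ i, pt y i ^ a i) '' S)

/-- Pullback of functions along a map of index sets, as a linear map. -/
def pullbackMap {F : Type*} [Field F] {X Y : Type*} (φ : Y → X) :
    (X → F) →ₗ[F] (Y → F) where
  toFun w := w ∘ φ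
  map_add' _ _ := rfl
  map_smul' _ _ := rfl

/-- The "tensor" map `c ↦ ((i, y) ↦ ξ^{d·i} · c y)`, realizing
`(1, ξ^d, …, ξ^{d(k−1)}) ⊗ c`. -/
def twistMap {F : Type*} [Field F] {Y : Type*} (k : ℕ) (ξ : F) (d : ℕ) :
    (Y → F) →ₗ[F] (Fin k × Y → F) where
  toFun c := fun p => ξ ^ (d * (p.1 : ℕ)) * c p.2
  map_add' c₁ c₂ := by funext p; simp [mul_add]
  map_smul' t c := by funext p; simp only [Pi.smul_apply, smul_eq_mul, RingHom.id_apply]; ring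

/-! The bijection `φ` factors as `(i, Q) ↦ (ξ^i, Q) ↦ ξ^i • Q`: the first map is bijective because
`ξ` generates the cyclic group `F_q^*` of order `q - 1`, the second because `P^m` is a set of
representatives. The code identity is then a statement about monomials: a monomial of degree `d`
evaluated at `ξ^i • Q` is `ξ^{d·i}` times its value at `Q`. -/

theorem bijective_fin_pow_of_forall_exists_pow_eq {G : Type*} [Group G] [Finite G] {u : G}
    (hu : ∀ g : G, ∃ k : ℕ, u ^ k = g) {n : ℕ} (hn : Nat.card G = n) :
    Function.Bijective (fun i : Fin n => u ^ (i : ℕ)) := by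
  have hord : orderOf u = n := by
    rw [← hn]
    exact orderOf_eq_card_of_forall_mem_powers fun g => hu g
  refine ⟨fun i j hij => Fin.ext ?_, fun g => ?_⟩
  · exact pow_injOn_Iio_orderOf (by simp [hord]) (by simp [hord]) hij
  · obtain ⟨k, rfl⟩ := hu g
    have hn0 : 0 < n := hord ▸ orderOf_pos u
    exact ⟨⟨k % n, Nat.mod_lt k hn0⟩, by simp only [← hord, pow_mod_orderOf]⟩

theorem bijective_of_existsUnique_smul {ι M X : Type*} [Monoid M] [SMul M X]
    {R Y : X → Prop} {g : ι → Mˣ} (hg : Function.Bijective g) {f : ι × Subtype R → Subtype Y}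
    (hf : ∀ p, (f p : X) = (g p.1 : M) • (p.2 : X))
    (hrep : ∀ y : X, Y y → ∃! p : Mˣ × X, R p.2 ∧ y = (p.1 : M) • p.2) :
    Function.Bijective f := by
  refine ⟨fun p p' hpp' => ?_, fun y => ?_⟩
  · have hsame : (g p.1, (p.2 : X)) = (g p'.1, (p'.2 : X)) :=
      (hrep _ (f p).2).unique ⟨p.2.2, hf p⟩ ⟨p'.2.2, by rw [hpp', hf p']⟩
    simp only [Prod.mk.injEq] at hsame
    exact Prod.ext (hg.1 hsame.1) (Subtype.ext hsame.2)
  · obtain ⟨⟨u, Q⟩, ⟨hQ, hy⟩, -⟩ := hrep y y.2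
    obtain ⟨i, rfl⟩ := hg.2 u
    exact ⟨(i, ⟨Q, hQ⟩), Subtype.ext ((hf _).trans hy.symm)⟩

theorem prod_const_mul_pow {ι M : Type*} [Fintype ι] [CommMonoid M] (c : M) (v : ι → M)
    (a : ι → ℕ) : ∏ i, (c * v i) ^ a i = c ^ (∑ i, a i) * ∏ i, v i ^ a i := by
  simp only [mul_pow, Finset.prod_mul_distrib, Finset.prod_pow_eq_pow_sum]

section EvaluationCodes

variable {F : Type*} [Field F] {N : ℕ}

theorem map_pullbackMap_evCode {X Y : Type*} (φ : Y → X) (pt : X → Fin N → F)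
    (S : Set (Fin N → ℕ)) :
    (evCode pt S).map (pullbackMap φ) = evCode (pt ∘ φ) S := by
  rw [evCode, evCode, Submodule.map_span, ← Set.image_comp]
  rfl

theorem map_twistMap_evCode {Y : Type*} (k : ℕ) (ξ : F) {d : ℕ} (pt : Y → Fin N → F)
    {S : Set (Fin N → ℕ)} (hS : ∀ a ∈ S, ∑ i, a i = d) :
    (evCode pt S).map (twistMap k ξ d) =
      evCode (fun p : Fin k × Y => ξ ^ (p.1 : ℕ) • pt p.2) S := by
  rw [evCode, evCode, Submodule.map_span, ← Set.image_comp]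
  refine congrArg _ (Set.image_congr fun a ha => funext fun p => ?_)
  change ξ ^ (d * (p.1 : ℕ)) * ∏ i, pt p.2 i ^ a i = ∏ i, (ξ ^ (p.1 : ℕ) * pt p.2 i) ^ a i
  rw [prod_const_mul_pow, hS a ha, ← pow_mul, mul_comm d]

end EvaluationCodes

theorem affine_squarefree_eq_tensor_projective_general
    {F : Type*} [Field F] [Fintype F] {m d : ℕ}
    (Pm : Finset (Fin (m + 1) → F))
    (hrep : ∀ v : Fin (m + 1) → F, v ≠ 0 →
      ∃! p : Fˣ × (Fin (m + 1) → F), p.2 ∈ Pm ∧ v = (p.1 : F) • p.2)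
    (ξ : F) (hξ0 : ξ ≠ 0) (hξ : ∀ a : F, a ≠ 0 → ∃ k : ℕ, ξ ^ k = a)
    (φ : Fin (Fintype.card F - 1) × {Q // Q ∈ Pm} → {v : Fin (m + 1) → F // v ≠ 0})
    (hφ : ∀ p : Fin (Fintype.card F - 1) × {Q // Q ∈ Pm},
      (φ p : Fin (m + 1) → F) = ξ ^ (p.1 : ℕ) • (p.2 : Fin (m + 1) → F)) :
    Function.Bijective φ ∧
      Submodule.map (pullbackMap φ)
          (evCode (Subtype.val : {v : Fin (m + 1) → F // v ≠ 0} → (Fin (m + 1) → F))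
            (Sd (m + 1) d)) =
        Submodule.map (twistMap (Fintype.card F - 1) ξ d)
          (evCode (fun Q : {Q // Q ∈ Pm} => (Q : Fin (m + 1) → F)) (Sd (m + 1) d)) := by
  have hgen : ∀ u : Fˣ, ∃ k : ℕ, Units.mk0 ξ hξ0 ^ k = u := fun u => by
    obtain ⟨k, hk⟩ := hξ u u.ne_zero
    exact ⟨k, Units.ext (by simpa using hk)⟩
  have hpow := bijective_fin_pow_of_forall_exists_pow_eq hgen
    (by rw [Nat.card_units, Nat.card_eq_fintype_card])
  refine ⟨bijective_of_existsUnique_smul hpow (fun p => by simp [hφ]) hrep, ?_⟩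
  rw [map_pullbackMap_evCode, map_twistMap_evCode _ _ _ fun a ha => ha.2]
  exact congrArg (evCode · _) (funext hφ)

/-- Let `1 ≤ d ≤ m+1`, let `ξ` be a primitive element of `F_q`, and let
`P^m` be a set of representatives of projective space. Identifying `F_q^{m+1} ∖ {0}` with
`Fin (q−1) × P^m` via the bijection `(i, Q) ↦ ξ^i • Q`, the affine square-free code
`C_d^{A,S}(m+1)` equals `(1, ξ^d, ξ^{2d}, …, ξ^{d(q−2)}) ⊗ C_d^{P,S}(m)`. -/
theorem affine_squarefree_eq_tensor_projective
    {F : Type*} [Field F] [Fintype F] [DecidableEq F] {m d : ℕ}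
    (hd1 : 1 ≤ d) (hdm : d ≤ m + 1)
    (Pm : Finset (Fin (m + 1) → F))
    (hPm0 : ∀ Q ∈ Pm, Q ≠ 0)
    (hrep : ∀ v : Fin (m + 1) → F, v ≠ 0 →
      ∃! p : Fˣ × (Fin (m + 1) → F), p.2 ∈ Pm ∧ v = (p.1 : F) • p.2)
    (ξ : F) (hξ0 : ξ ≠ 0) (hξ : ∀ a : F, a ≠ 0 → ∃ k : ℕ, ξ ^ k = a)
    (φ : Fin (Fintype.card F - 1) × {Q // Q ∈ Pm} → {v : Fin (m + 1) → F // v ≠ 0})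
    (hφ : ∀ p : Fin (Fintype.card F - 1) × {Q // Q ∈ Pm},
      (φ p : Fin (m + 1) → F) = ξ ^ (p.1 : ℕ) • (p.2 : Fin (m + 1) → F)) :
    Function.Bijective φ ∧
      Submodule.map (pullbackMap φ)
          (evCode (Subtype.val : {v : Fin (m + 1) → F // v ≠ 0} → (Fin (m + 1) → F))
            (Sd (m + 1) d)) =
        Submodule.map (twistMap (Fintype.card F - 1) ξ d)
          (evCode (fun Q : {Q // Q ∈ Pm} => (Q : Fin (m + 1) → F)) (Sd (m + 1) d)) :=
  affine_squarefree_eq_tensor_projective_general Pm hrep ξ hξ0 hξ φ hφ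
end

section
/- Let 1 ≤ d ≤ m+1. Then dim_{F_q}(C_d^{A,S}(m+1)) = dim_{F_q}(C_d^{P,S}(m)), and for every 1 ≤ r ≤ C(m+1, d) one has d_r(C_d^{A,S}(m+1)) = (q−1)·d_r(C_d^{P,S}(m)). -/
/-! Every nonzero vector is uniquely `λ • Q` with `λ ∈ Fˣ` and `Q ∈ Pm`, and a monomial of degree
`d` satisfies `x^α(λ • Q) = λ^d x^α(Q)`. Hence the affine code is the image of the projective code
under the injective linear map `g ↦ (λ • Q ↦ λ^d g(Q))`. This map preserves dimension, and it
multiplies the support of every subcode by `q - 1`, since each coordinate `Q` is spread over the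
`q - 1` nonzero points of its line; so it multiplies every generalized Hamming weight by `q - 1`. -/

open Finset Function

lemma Nat.sInf_image_mul_left (c : ℕ) (S : Set ℕ) :
    sInf ((fun k => c * k) '' S) = c * sInf S := by
  rcases S.eq_empty_or_nonempty with rfl | hS
  · simp
  · apply le_antisymm (Nat.sInf_le (Set.mem_image_of_mem _ (Nat.sInf_mem hS)))
    obtain ⟨k, hk, hk_eq⟩ := Nat.sInf_mem (hS.image fun k => c * k)
    exact hk_eq ▸ Nat.mul_le_mul_left c (Nat.sInf_le hk)

lemma card_filter_mem_eq_mul_of_card_fiber {ι κ : Type*} [Fintype ι] [DecidableEq κ]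
    {σ : ι → κ} {c : ℕ} (hfib : ∀ k, #{i | σ i = k} = c) (s : Finset κ) :
    #{i | σ i ∈ s} = c * #s := by
  have hfib' : ∀ k ∈ s, #{i ∈ {i | σ i ∈ s} | σ i = k} = c := fun k hk => by
    rw [filter_filter, ← hfib k]
    congr 1
    ext i
    aesop
  rw [card_eq_sum_card_fiberwise (s := {i | σ i ∈ s}) fun i hi => (mem_filter.mp hi).2,
    sum_congr rfl hfib', sum_const, smul_eq_mul, mul_comm]

lemma card_filter_snd_equiv_eq {ι G κ : Type*} [Fintype ι] [Fintype G] [DecidableEq κ]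
    (e : ι ≃ G × κ) (k : κ) : #{i | (e i).2 = k} = Fintype.card G := by
  rw [card_equiv e (t := univ ×ˢ {k}) (by simp [Prod.ext_iff, eq_comm]), card_product,
    card_singleton, mul_one, card_univ]

section GeneralizedHammingWeight

variable {F ι κ : Type*} [Field F]

def weightedComap (σ : ι → κ) (w : ι → F) : (κ → F) →ₗ[F] (ι → F) :=
  LinearMap.mulLeft F w ∘ₗ LinearMap.funLeft F F σ

variable {σ : ι → κ} {w : ι → F}

@[simp]
lemma weightedComap_apply (g : κ → F) (i : ι) : weightedComap σ w g i = w i * g (σ i) := rfl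

lemma weightedComap_injective (hσ : Surjective σ) (hw : ∀ i, w i ≠ 0) :
    Injective (weightedComap σ w) := by
  intro g₁ g₂ h
  funext k
  obtain ⟨i, rfl⟩ := hσ k
  exact mul_left_cancel₀ (hw i) (congrFun h i)

variable [Fintype ι] [Fintype κ]

lemma GHW_map_of_card_codeSupp_map {T : (κ → F) →ₗ[F] (ι → F)} (hT : Injective T) {c : ℕ}
    (hsupp : ∀ C : Submodule F (κ → F), #(codeSupp (C.map T)) = c * #(codeSupp C))
    (C : Submodule F (κ → F)) (r : ℕ) :
    GHW (C.map T) r = c * GHW C r := by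
  unfold GHW
  rw [← Nat.sInf_image_mul_left]
  congr 1
  ext k
  constructor
  · rintro ⟨D, hDC, hDr, rfl⟩
    have hD : (D.comap T).map T = D :=
      Submodule.map_comap_eq_of_le (hDC.trans LinearMap.map_le_range)
    have hDr' : Module.finrank F (D.comap T) = r := by
      rw [← hDr, (Submodule.equivMapOfInjective T hT _).finrank_eq, hD]
    refine ⟨_, ⟨D.comap T, ?_, hDr', rfl⟩, show c * _ = _ by rw [← hsupp, hD]⟩
    simpa [Submodule.comap_map_eq_of_injective hT] using Submodule.comap_mono (f := T) hDC
  · rintro ⟨_, ⟨D, hDC, rfl, rfl⟩, rfl⟩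
    exact ⟨D.map T, Submodule.map_mono hDC,
      (Submodule.equivMapOfInjective T hT D).finrank_eq.symm, hsupp D⟩

variable [DecidableEq κ]

lemma codeSupp_map_weightedComap (hw : ∀ i, w i ≠ 0) (C : Submodule F (κ → F)) :
    codeSupp (C.map (weightedComap σ w)) = ({i | σ i ∈ codeSupp C} : Finset ι) := by
  ext i
  rw [mem_filter]
  simp [codeSupp, hw i]

lemma GHW_map_weightedComap (hσ : Surjective σ) (hw : ∀ i, w i ≠ 0) {c : ℕ}
    (hfib : ∀ k, #{i | σ i = k} = c) (C : Submodule F (κ → F)) (r : ℕ) :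
    GHW (C.map (weightedComap σ w)) r = c * GHW C r := by
  refine GHW_map_of_card_codeSupp_map (weightedComap_injective hσ hw) (fun D => ?_) C r
  rw [codeSupp_map_weightedComap hw, card_filter_mem_eq_mul_of_card_fiber hfib]

end GeneralizedHammingWeight

lemma evCode_smul_eq_map_weightedComap {F X Y : Type*} [Field F] {N d : ℕ}
    {S : Set (Fin N → ℕ)} (hS : ∀ a ∈ S, ∑ i, a i = d) (pt : X → Fin N → F) (σ : Y → X)
    (lam : Y → F) :
    evCode (fun y => lam y • pt (σ y)) S =
      (evCode pt S).map (weightedComap σ fun y => lam y ^ d) := by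
  unfold evCode
  rw [Submodule.map_span, Set.image_image]
  refine congrArg _ (Set.image_congr fun a ha => funext fun y => ?_)
  simp [mul_pow, prod_mul_distrib, prod_pow_eq_pow_sum, hS a ha]

section ProjectiveRepresentatives

variable {F V : Type*} [Field F] [AddCommGroup V] [Module F V] {P : Finset V}

noncomputable def unitsSmulEquivNeZero (hP0 : ∀ Q ∈ P, Q ≠ 0)
    (hrep : ∀ v : V, v ≠ 0 → ∃! p : Fˣ × V, p.2 ∈ P ∧ v = (p.1 : F) • p.2) :
    Fˣ × {Q // Q ∈ P} ≃ {v : V // v ≠ 0} :=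
  Equiv.ofBijective (fun p => ⟨(p.1 : F) • p.2.1, smul_ne_zero p.1.ne_zero (hP0 _ p.2.2)⟩) <| by
    refine ⟨fun ⟨l, Q⟩ ⟨l', Q'⟩ h => ?_, fun v => ?_⟩
    · have hv := congrArg Subtype.val h
      have := (hrep _ (smul_ne_zero l.ne_zero (hP0 _ Q.2))).unique (y₁ := (l, Q.1))
        (y₂ := (l', Q'.1)) ⟨Q.2, rfl⟩ ⟨Q'.2, hv⟩
      simp only [Prod.mk.injEq] at this
      exact Prod.ext this.1 (Subtype.ext this.2)
    · obtain ⟨⟨l, Q⟩, ⟨hQ, hv⟩, -⟩ := hrep v v.2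
      exact ⟨(l, ⟨Q, hQ⟩), Subtype.ext hv.symm⟩

lemma unitsSmulEquivNeZero_symm_smul (hP0 : ∀ Q ∈ P, Q ≠ 0)
    (hrep : ∀ v : V, v ≠ 0 → ∃! p : Fˣ × V, p.2 ∈ P ∧ v = (p.1 : F) • p.2)
    (v : {v : V // v ≠ 0}) :
    (((unitsSmulEquivNeZero hP0 hrep).symm v).1 : F) •
      ((unitsSmulEquivNeZero hP0 hrep).symm v).2.1 = v :=
  congrArg Subtype.val ((unitsSmulEquivNeZero hP0 hrep).apply_symm_apply v)

end ProjectiveRepresentatives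

theorem dim_and_ghw_affine_vs_projective_squarefree_general
    {F : Type*} [Field F] [Fintype F] [DecidableEq F] {m d : ℕ}
    (Pm : Finset (Fin (m + 1) → F))
    (hPm0 : ∀ Q ∈ Pm, Q ≠ 0)
    (hrep : ∀ v : Fin (m + 1) → F, v ≠ 0 →
      ∃! p : Fˣ × (Fin (m + 1) → F), p.2 ∈ Pm ∧ v = (p.1 : F) • p.2) :
    Module.finrank F
        (evCode (Subtype.val : {v : Fin (m + 1) → F // v ≠ 0} → (Fin (m + 1) → F))
          (Sd (m + 1) d)) =
      Module.finrank F
        (evCode (fun Q : {Q // Q ∈ Pm} => (Q : Fin (m + 1) → F)) (Sd (m + 1) d)) ∧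
    ∀ r : ℕ, 1 ≤ r → r ≤ (m + 1).choose d →
      GHW (evCode (Subtype.val : {v : Fin (m + 1) → F // v ≠ 0} → (Fin (m + 1) → F))
          (Sd (m + 1) d)) r =
        (Fintype.card F - 1) *
          GHW (evCode (fun Q : {Q // Q ∈ Pm} => (Q : Fin (m + 1) → F)) (Sd (m + 1) d)) r := by
  set e := (unitsSmulEquivNeZero hPm0 hrep).symm
  have hval : (Subtype.val : {v : Fin (m + 1) → F // v ≠ 0} → _) =
      fun v => ((e v).1 : F) • ((e v).2 : Fin (m + 1) → F) :=
    funext fun v => (unitsSmulEquivNeZero_symm_smul hPm0 hrep v).symm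
  have hσ : Surjective fun v => (e v).2 := fun Q => ⟨e.symm (1, Q), by simp⟩
  have hw : ∀ v, ((e v).1 : F) ^ d ≠ 0 := fun v => pow_ne_zero d (e v).1.ne_zero
  rw [hval, evCode_smul_eq_map_weightedComap fun a ha => ha.2]
  refine ⟨(Submodule.equivMapOfInjective _ (weightedComap_injective hσ hw) _).finrank_eq.symm,
    fun r _ _ => ?_⟩
  rw [GHW_map_weightedComap hσ hw (card_filter_snd_equiv_eq e), Fintype.card_units]

/-- Let `1 ≤ d ≤ m+1`. Then `dim C_d^{A,S}(m+1) = dim C_d^{P,S}(m)`, and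
for every `1 ≤ r ≤ C(m+1,d)` one has `d_r(C_d^{A,S}(m+1)) = (q−1) · d_r(C_d^{P,S}(m))`. -/
theorem dim_and_ghw_affine_vs_projective_squarefree
    {F : Type*} [Field F] [Fintype F] [DecidableEq F] {m d : ℕ}
    (hd1 : 1 ≤ d) (hdm : d ≤ m + 1)
    (Pm : Finset (Fin (m + 1) → F))
    (hPm0 : ∀ Q ∈ Pm, Q ≠ 0)
    (hrep : ∀ v : Fin (m + 1) → F, v ≠ 0 →
      ∃! p : Fˣ × (Fin (m + 1) → F), p.2 ∈ Pm ∧ v = (p.1 : F) • p.2) :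
    Module.finrank F
        (evCode (Subtype.val : {v : Fin (m + 1) → F // v ≠ 0} → (Fin (m + 1) → F))
          (Sd (m + 1) d)) =
      Module.finrank F
        (evCode (fun Q : {Q // Q ∈ Pm} => (Q : Fin (m + 1) → F)) (Sd (m + 1) d)) ∧
    ∀ r : ℕ, 1 ≤ r → r ≤ (m + 1).choose d →
      GHW (evCode (Subtype.val : {v : Fin (m + 1) → F // v ≠ 0} → (Fin (m + 1) → F))
          (Sd (m + 1) d)) r =
        (Fintype.card F - 1) *
          GHW (evCode (fun Q : {Q // Q ∈ Pm} => (Q : Fin (m + 1) → F)) (Sd (m + 1) d)) r :=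
  dim_and_ghw_affine_vs_projective_squarefree_general Pm hPm0 hrep
end
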